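/- arXiv:2307.03964 — 5 statements merged into one kernel-verified Lean document; each statement's English description precedes it below -/
import Mathlib

section
/- Let G be a 2-connected graph of order n ≥ 4 containing two adjacent vertices u and v each of degree 2. Then rvd(G) ≤ rvd(G/uv), where G/uv is the graph obtained from G by contracting the edge uv. -/
open SimpleGraph

variable {V : Type*}

/-- `c` is a rainbow vertex-disconnection coloring of `G`: for any two distinct vertices
`x, y` there is a set `S` avoiding `x` and `y` that meets every `x`-`y` walk of `G - xy`
(i.e. `x` and `y` lie in different components of `(G - xy) - S`), and which is rainbow
(when `x, y` nonadjacent), resp. such that `S + x` or `S + y` is rainbow (when adjacent). -/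
def IsRVDColoring {α : Type*} (G : SimpleGraph V) (c : V → α) : Prop :=
  ∀ x y : V, x ≠ y → ∃ S : Set V,
    x ∉ S ∧ y ∉ S ∧
    (∀ p : (G.deleteEdges {s(x, y)}).Walk x y, ∃ v ∈ p.support, v ∈ S) ∧
    (G.Adj x y → Set.InjOn c (insert x S) ∨ Set.InjOn c (insert y S)) ∧
    (¬ G.Adj x y → Set.InjOn c S)

/-- The rainbow vertex-disconnection number: the minimum number of colors of a
rainbow vertex-disconnection coloring. -/
noncomputable def rvd (G : SimpleGraph V) : ℕ :=
  sInf {n | ∃ c : V → Fin n, IsRVDColoring G c}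

/-- `G` contains `K₄` as a minor (via a minor model with four branch sets). -/
def HasK4Minor (G : SimpleGraph V) : Prop :=
  ∃ B : Fin 4 → Set V,
    (∀ i, (B i).Nonempty) ∧
    (∀ i, (G.induce (B i)).Connected) ∧
    (∀ i j, i ≠ j → Disjoint (B i) (B j)) ∧
    (∀ i j, i ≠ j → ∃ a ∈ B i, ∃ b ∈ B j, G.Adj a b)

/-- A finite graph is 2-connected if it has at least 3 vertices and deleting any
single vertex leaves a connected graph. -/
def TwoConnected [Fintype V] (G : SimpleGraph V) : Prop :=
  3 ≤ Fintype.card V ∧ ∀ w : V, (G.induce ({w}ᶜ : Set V)).Connected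

/-- Contraction of the edge `uv`: delete `v` and join `u` to the former neighbors of `v`. -/
def contractEdge (G : SimpleGraph V) (u v : V) : SimpleGraph {x : V // x ≠ v} where
  Adj a b := a ≠ b ∧ (G.Adj a b ∨ ((a : V) = u ∧ G.Adj v b) ∨ ((b : V) = u ∧ G.Adj v a))
  symm := by
    constructor
    rintro a b ⟨h1, h2⟩
    refine ⟨h1.symm, ?_⟩
    rcases h2 with h | h | h
    · exact Or.inl h.symm
    · exact Or.inr (Or.inr h)
    · exact Or.inr (Or.inl h)
  loopless := by constructor; rintro a ⟨h, _⟩; exact h rfl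

/-- `T_G(u)`: vertices `x` of degree at least 3 that are adjacent to `u` or joined
to `u` through a `2`-vertex. -/
def Tset [Fintype V] (G : SimpleGraph V) [DecidableRel G.Adj] (u : V) : Set V :=
  {x | 3 ≤ G.degree x ∧ (G.Adj u x ∨ ∃ z : V, G.degree z = 2 ∧ G.Adj u z ∧ G.Adj z x)}

/-- `t_G(u) = |T_G(u)|`. -/
noncomputable def tnum [Fintype V] (G : SimpleGraph V) [DecidableRel G.Adj] (u : V) : ℕ :=
  (Tset G u).ncard

/-- An injective coloring: vertices with a common neighbor get distinct colors. -/
def IsInjectiveColoring {α : Type*} (G : SimpleGraph V) (c : V → α) : Prop :=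
  ∀ u v w : V, G.Adj u w → G.Adj v w → u ≠ v → c u ≠ c v

/-- The injective chromatic number. -/
noncomputable def injChromaticNumber (G : SimpleGraph V) : ℕ :=
  sInf {n | ∃ c : V → Fin n, IsInjectiveColoring G c}

/-- A graph has no cut vertex if deleting any vertex leaves a preconnected graph. -/
def HasNoCutVertex {W : Type*} (H : SimpleGraph W) : Prop :=
  ∀ w : W, (H.induce ({w}ᶜ : Set W)).Preconnected

/-- A block of `G`: a maximal connected subgraph of `G` without a cut vertex. -/
def IsBlock (G : SimpleGraph V) (H : G.Subgraph) : Prop :=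
  H.coe.Connected ∧ HasNoCutVertex H.coe ∧
    ∀ H' : G.Subgraph, H ≤ H' → H'.coe.Connected → HasNoCutVertex H'.coe → H' = H

/-- `c` is a `k`-fold coloring: each vertex receives `k` colors, adjacent vertices get
disjoint color sets. -/
def IsKFoldColoring {n : ℕ} (G : SimpleGraph V) (k : ℕ) (c : V → Finset (Fin n)) : Prop :=
  (∀ v, (c v).card = k) ∧ ∀ u v, G.Adj u v → Disjoint (c u) (c v)

/-- The `k`-fold chromatic number `χ_k(G)`. -/
noncomputable def kfoldChromaticNumber (G : SimpleGraph V) (k : ℕ) : ℕ :=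
  sInf {n | ∃ c : V → Finset (Fin n), IsKFoldColoring G k c}

/-- The fractional chromatic number `χ_f(G) = inf_k χ_k(G)/k`. -/
noncomputable def fracChromaticNumber (G : SimpleGraph V) : ℝ :=
  ⨅ k : {k : ℕ // 0 < k}, (kfoldChromaticNumber G k : ℝ) / (k : ℕ)

/-- The chromatic number as a natural number. -/
noncomputable def natChromaticNumber (G : SimpleGraph V) : ℕ :=
  sInf {n | G.Colorable n}

/-- The independence number `α(G)`. -/
noncomputable def indepNumber (G : SimpleGraph V) : ℕ :=
  sSup {n | ∃ s : Set V, (∀ u ∈ s, ∀ v ∈ s, ¬ G.Adj u v) ∧ s.ncard = n}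

/-- The bipartite graph `G̃` from the reduction: original vertices `V`, vertices
`s_{uv}, s'_{uv}` (type `↥G.edgeSet × Fin 2`, left summand) and `t_{uv}, t'_{uv}`
(right summand); each of `s_{uv}, s'_{uv}` is joined to `u` and `v`, and all
edges between `V_s` and `V_t` are present. -/
def tildeBip (G : SimpleGraph V) :
    SimpleGraph (V ⊕ ((↥G.edgeSet × Fin 2) ⊕ (↥G.edgeSet × Fin 2))) :=
  SimpleGraph.fromRel fun x y =>
    (∃ (a : V) (e : ↥G.edgeSet) (i : Fin 2),
        x = Sum.inl a ∧ y = Sum.inr (Sum.inl (e, i)) ∧ a ∈ (e : Sym2 V)) ∨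
    (∃ p q, x = Sum.inr (Sum.inl p) ∧ y = Sum.inr (Sum.inr q))

/-- The split graph `G̃` from the reduction: original vertices `V` and a clique on
`V_s = {s_{uv}, s'_{uv}, s''_{uv}}`, each of the three joined to `u` and `v`. -/
def tildeSplit (G : SimpleGraph V) : SimpleGraph (V ⊕ (↥G.edgeSet × Fin 3)) :=
  SimpleGraph.fromRel fun x y =>
    (∃ (a : V) (e : ↥G.edgeSet) (i : Fin 3),
        x = Sum.inl a ∧ y = Sum.inr (e, i) ∧ a ∈ (e : Sym2 V)) ∨
    (∃ p q, x = Sum.inr p ∧ y = Sum.inr q)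

/-- The graph `H`: `k` copies of `V` together with `V_s` and `V_t` as in `tildeBip`. -/
def HBip (G : SimpleGraph V) (k : ℕ) :
    SimpleGraph ((V × Fin k) ⊕ ((↥G.edgeSet × Fin 2) ⊕ (↥G.edgeSet × Fin 2))) :=
  SimpleGraph.fromRel fun x y =>
    (∃ (a : V) (j : Fin k) (e : ↥G.edgeSet) (i : Fin 2),
        x = Sum.inl (a, j) ∧ y = Sum.inr (Sum.inl (e, i)) ∧ a ∈ (e : Sym2 V)) ∨
    (∃ p q, x = Sum.inr (Sum.inl p) ∧ y = Sum.inr (Sum.inr q))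

/-- The graph `H`: `k` copies of `V` together with the clique `V_s` as in `tildeSplit`. -/
def HSplit (G : SimpleGraph V) (k : ℕ) :
    SimpleGraph ((V × Fin k) ⊕ (↥G.edgeSet × Fin 3)) :=
  SimpleGraph.fromRel fun x y =>
    (∃ (a : V) (j : Fin k) (e : ↥G.edgeSet) (i : Fin 3),
        x = Sum.inl (a, j) ∧ y = Sum.inr (e, i) ∧ a ∈ (e : Sym2 V)) ∨
    (∃ p q, x = Sum.inr p ∧ y = Sum.inr q)

/-!
With `N(u) = {v, a}` and `N(v) = {u, b}`, the graph `G` is `G/uv` with its edge `u'b` subdivided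
by `v`. Pull an optimal colouring `c'` of `G/uv` back along the quotient map `π : V → V/uv`
(`contractMap`) and recolour one vertex `o ∈ {u, v}`. For `x, y ∉ {u, v}`, a rainbow cut `S'`
of `π x, π y` pulls back to the cut `π⁻¹ S' \ {o}`, rainbow as the colouring agrees with `c' ∘ π`
off `o`; dropping `o` is harmless since `u, v` have degree two, so a path through `o` also passes
through the other one. The pairs meeting `{u, v}` are cut by a neighbourhood or by another
pullback; the delicate one is `v, a` when `c'` is constant on `u', a, b`. Then `ab` is not an
edge, as `u'ab` would be a monochromatic triangle of `G/uv`, and `u` together with the pullback of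
a cut separating `a` from `b` separates `v` from `a`. Two-connectivity gives `a ≠ b` and a cycle
of `G/uv` through `u'a`, so that `c'` uses at least two colours.
-/

open Function Set

namespace SimpleGraph

theorem exists_neighborSet_eq_pair {G : SimpleGraph V} {u v : V}
    [Fintype (G.neighborSet u)] (hd : G.degree u = 2) (huv : G.Adj u v) :
    ∃ a, a ≠ v ∧ G.neighborSet u = {v, a} := by
  classical
  rw [← card_neighborFinset_eq_degree, Finset.card_eq_two] at hd
  obtain ⟨x, y, hxy, hN⟩ := hd
  have hv : v ∈ G.neighborFinset u := by simpa using huv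
  rw [← coe_neighborFinset, hN]
  rw [hN] at hv
  rcases Finset.mem_insert.1 hv with rfl | hv
  · exact ⟨y, hxy.symm, by simp⟩
  · obtain rfl := Finset.mem_singleton.1 hv
    exact ⟨x, hxy, by simp [Set.pair_comm]⟩

theorem not_adj_of_neighborSet_eq_pair {G : SimpleGraph V} {u v a w : V}
    (h : G.neighborSet u = {v, a}) (hwv : w ≠ v) (hwa : w ≠ a) : ¬ G.Adj u w := fun hw => by
  simp [← mem_neighborSet, h, hwv, hwa] at hw

theorem Walk.IsPath.mem_support_of_neighborSet_subset {P : SimpleGraph V} {x y o k e : V}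
    {p : P.Walk x y} (hp : p.IsPath) (ho : P.neighborSet o ⊆ {k, e}) (hxo : x ≠ o)
    (hyo : y ≠ o) (h : o ∈ p.support) : k ∈ p.support := by
  induction p with
  | nil => exact absurd (by simpa using h) hxo.symm
  | @cons x w y hxw q ih =>
    rw [Walk.cons_isPath_iff] at hp
    by_cases hwo : w = o
    · subst hwo
      rcases ho hxw.symm with rfl | rfl
      · simp
      cases q with
      | nil => exact absurd rfl hyo
      | cons hwz r =>
        rcases ho hwz with rfl | rfl
        · simp
        · exact absurd (by simp) hp.2
    · have hq : o ∈ q.support := by simpa [Ne.symm hxo] using h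
      simpa using Or.inr (ih hp.1 hwo hyo hq)

def Separates (P : SimpleGraph V) (x y : V) (S : Set V) : Prop :=
  ∀ p : P.Walk x y, ∃ w ∈ p.support, w ∈ S

namespace Separates

variable {P : SimpleGraph V} {x y e k o : V} {S T : Set V}

theorem symm (h : P.Separates x y S) : P.Separates y x S := fun p => by
  simpa using h p.reverse

theorem mono (h : P.Separates x y S) (hST : S ⊆ T) : P.Separates x y T := fun p =>
  let ⟨w, hw, hwS⟩ := h p
  ⟨w, hw, hST hwS⟩

theorem of_isPath (h : ∀ p : P.Walk x y, p.IsPath → ∃ w ∈ p.support, w ∈ S) :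
    P.Separates x y S := by
  classical
  intro p
  obtain ⟨w, hw, hwS⟩ := h _ p.bypass_isPath
  exact ⟨w, p.support_bypass_subset_support hw, hwS⟩

theorem neighborSet (hxy : x ≠ y) : P.Separates x y (P.neighborSet x) := by
  rintro (_ | ⟨h, q⟩)
  · exact absurd rfl hxy
  · exact ⟨_, by simp, h⟩

theorem deleteEdges_neighborSet (hxy : x ≠ y) :
    (P.deleteEdges {s(x, y)}).Separates x y (P.neighborSet x \ {y}) :=
  (neighborSet hxy).mono fun w hw => by simp at hw; exact ⟨hw.1, hw.2.1⟩

theorem comap {W : Type*} {Q : SimpleGraph W} (f : V → W)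
    (hf : ∀ s t, P.Adj s t → f s = f t ∨ Q.Adj (f s) (f t)) {T : Set W}
    (h : Q.Separates (f x) (f y) T) : P.Separates x y (f ⁻¹' T) := by
  intro p
  induction p with
  | nil =>
    obtain ⟨w, hw, hwT⟩ := h .nil
    refine ⟨_, Walk.start_mem_support _, ?_⟩
    simp_all
  | @cons x w y hxw q ih =>
    by_cases hx : f x ∈ T
    · exact ⟨x, by simp, hx⟩
    suffices hw : Q.Separates (f w) (f y) T by
      obtain ⟨z, hz, hzT⟩ := ih hw
      exact ⟨z, by simp [hz], hzT⟩
    intro r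
    rcases hf _ _ hxw with heq | hQ
    · simpa using h (r.copy heq.symm rfl)
    · obtain ⟨z, hz, hzT⟩ := h (.cons hQ r)
      rcases List.mem_cons.1 (by simpa using hz) with rfl | hz
      · exact absurd hzT hx
      · exact ⟨z, hz, hzT⟩

theorem mem_of_adj_of_adj {z : V} (h : (P.deleteEdges {s(x, y)}).Separates x y S)
    (hxz : P.Adj x z) (hzy : P.Adj z y) (hx : x ∉ S) (hy : y ∉ S) : z ∈ S := by
  have hxz' : (P.deleteEdges {s(x, y)}).Adj x z := by simp [hxz, hzy.ne, hxz.ne']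
  have hzy' : (P.deleteEdges {s(x, y)}).Adj z y := by simp [hzy, hxz.ne', hzy.ne]
  obtain ⟨w, hw, hwS⟩ := h (.cons hxz' (.cons hzy' .nil))
  simp only [Walk.support_cons, Walk.support_nil, List.mem_cons, List.not_mem_nil,
    or_false] at hw
  rcases hw with rfl | rfl | rfl
  exacts [absurd hwS hx, hwS, absurd hwS hy]

theorem diff_singleton_of_neighborSet_subset (h : P.Separates x y S) (hk : k ∈ S)
    (hko : k ≠ o) (ho : P.neighborSet o ⊆ {k, e}) (hxo : x ≠ o) (hyo : y ≠ o) :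
    P.Separates x y (S \ {o}) :=
  of_isPath fun p hp => by
    obtain ⟨w, hw, hwS⟩ := h p
    by_cases hwo : w = o
    · exact ⟨k, hp.mem_support_of_neighborSet_subset ho hxo hyo (hwo ▸ hw), hk, hko⟩
    · exact ⟨w, hw, hwS, hwo⟩

theorem of_neighborSet_subset (h : P.Separates e y S) (hk : k ∈ S) (hko : k ≠ o)
    (ho : P.neighborSet o ⊆ {k, e}) (hyo : y ≠ o) : P.Separates o y (S \ {o}) :=
  of_isPath fun p hp => by
    cases p with
    | nil => exact absurd rfl hyo
    | cons how q =>
      rw [Walk.cons_isPath_iff] at hp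
      rcases ho how with rfl | rfl
      · exact ⟨_, by simp, hk, hko⟩
      · obtain ⟨z, hz, hzS⟩ := h q
        exact ⟨z, by simp [hz], hzS, by rintro rfl; exact hp.2 hz⟩

end Separates

end SimpleGraph

section TwoConnected

variable [Fintype V] {G : SimpleGraph V}

theorem TwoConnected.exists_walk_notMem_support (h : TwoConnected G) {w x y : V}
    (hx : x ≠ w) (hy : y ≠ w) : ∃ p : G.Walk x y, w ∉ p.support := by
  obtain ⟨q⟩ := (h.2 w).preconnected ⟨x, Set.mem_compl_singleton_iff.2 hx⟩
    ⟨y, Set.mem_compl_singleton_iff.2 hy⟩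
  have hsupp := Walk.support_map (Embedding.induce ({w}ᶜ : Set V)).toHom q
  refine ⟨q.map (Embedding.induce _).toHom, fun hw => ?_⟩
  erw [hsupp] at hw
  simp at hw

theorem TwoConnected.reachable_deleteEdges (h : TwoConnected G) {x y z : V}
    (hxz : G.Adj x z) (hzy : z ≠ y) (hxy : x ≠ y) :
    (G.deleteEdges {s(x, y)}).Reachable x y := by
  obtain ⟨p, hp⟩ := h.exists_walk_notMem_support hxz.ne' hxy.symm
  have hxz' : (G.deleteEdges {s(x, y)}).Adj x z := by simp [hxz, hzy, hxz.ne']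
  refine ⟨.cons hxz' (p.transfer _ fun e he => ?_)⟩
  rw [edgeSet_deleteEdges]
  refine ⟨p.edges_subset_edgeSet he, fun hxe => hp ?_⟩
  rw [Set.mem_singleton_iff.1 hxe] at he
  exact p.fst_mem_support_of_mem_edges he

theorem TwoConnected.ne_of_neighborSet_eq_pair {u v a b : V} (h : TwoConnected G)
    (hn : 4 ≤ Fintype.card V) (hu : G.neighborSet u = {v, a})
    (hv : G.neighborSet v = {u, b}) : a ≠ b := by
  classical
  rintro rfl
  have huv : G.Adj u v := by simp [← mem_neighborSet, hu]
  have hua : G.Adj u a := by simp [← mem_neighborSet, hu]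
  have hva : G.Adj v a := by simp [← mem_neighborSet, hv]
  obtain ⟨w, -, hw⟩ := Finset.exists_mem_notMem_of_card_lt_card (s := {u, v, a})
    (t := Finset.univ) (Finset.card_le_three.trans_lt (by simpa using Nat.lt_of_succ_le hn))
  simp only [Finset.mem_insert, Finset.mem_singleton, not_or] at hw
  obtain ⟨hwu, hwv, hwa⟩ := hw
  -- `{u, v}` hangs off the rest of `G` at `a` alone
  have hsep : G.Separates u w ({v, a} \ {v}) := by
    refine (hu ▸ Separates.neighborSet (Ne.symm hwu)).diff_singleton_of_neighborSet_subset
      (e := u) (by simp) hva.ne' (by rw [hv, Set.pair_comm]) huv.ne hwv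
  obtain ⟨p, hp⟩ := h.exists_walk_notMem_support hua.ne hwa
  obtain ⟨z, hz, hzS⟩ := hsep p
  obtain rfl : z = a := by simpa [hva.ne] using hzS
  exact hp hz

end TwoConnected

section RainbowCut

variable {α : Type*} {G : SimpleGraph V} {c : V → α} {x y : V} {S : Set V}

def IsRainbowCut (G : SimpleGraph V) (c : V → α) (x y : V) (S : Set V) : Prop :=
  x ∉ S ∧ y ∉ S ∧ (G.deleteEdges {s(x, y)}).Separates x y S ∧
    (G.Adj x y → InjOn c (insert x S) ∨ InjOn c (insert y S)) ∧ (¬ G.Adj x y → InjOn c S)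

theorem IsRainbowCut.symm (h : IsRainbowCut G c x y S) : IsRainbowCut G c y x S := by
  obtain ⟨hx, hy, hsep, hadj, hnadj⟩ := h
  refine ⟨hy, hx, ?_, fun h => (hadj h.symm).symm, fun h => hnadj fun h' => h h'.symm⟩
  rw [Sym2.eq_swap]
  exact hsep.symm

theorem isRainbowCut_neighborSet (hxy : x ≠ y)
    (hadj : G.Adj x y →
      InjOn c (insert x (G.neighborSet x \ {y})) ∨ InjOn c (insert y (G.neighborSet x \ {y})))
    (hnadj : ¬ G.Adj x y → InjOn c (G.neighborSet x \ {y})) :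
    IsRainbowCut G c x y (G.neighborSet x \ {y}) :=
  ⟨fun h => G.loopless.irrefl x h.1, fun h => h.2 rfl,
    Separates.deleteEdges_neighborSet hxy, hadj, hnadj⟩

theorem isRainbowCut_neighborSet_of_injOn (hxy : x ≠ y) (hc : InjOn c (G.neighborSet x)) :
    IsRainbowCut G c x y (G.neighborSet x \ {y}) :=
  isRainbowCut_neighborSet hxy
    (fun h => Or.inr (hc.mono (by simp [h])))
    fun _ => hc.mono sdiff_subset

theorem IsRVDColoring.of_injective (hc : Injective c) : IsRVDColoring G c := fun _ _ hxy =>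
  ⟨_, isRainbowCut_neighborSet_of_injOn hxy hc.injOn⟩

theorem IsRVDColoring.nontrivial (hc : IsRVDColoring G c) (hxy : G.Adj x y)
    (hr : (G.deleteEdges {s(x, y)}).Reachable x y) : Nontrivial α := by
  obtain ⟨S, hxS, hyS, hsep, hadj, -⟩ := hc x y hxy.ne
  obtain ⟨p⟩ := hr
  obtain ⟨z, -, hzS⟩ := hsep p
  have hzx : z ≠ x := by rintro rfl; exact hxS hzS
  have hzy : z ≠ y := by rintro rfl; exact hyS hzS
  rcases hadj hxy with h | h
  · exact ⟨c z, c x, fun he => hzx (h (mem_insert_of_mem _ hzS) (mem_insert _ _) he)⟩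
  · exact ⟨c z, c y, fun he => hzy (h (mem_insert_of_mem _ hzS) (mem_insert _ _) he)⟩

theorem IsRVDColoring.ne_or_ne_of_adj_of_adj {z : V} (hc : IsRVDColoring G c)
    (hxz : G.Adj x z) (hzy : G.Adj z y) (hxy : G.Adj x y) : c z ≠ c x ∨ c z ≠ c y := by
  obtain ⟨S, hxS, hyS, hsep, hadj, -⟩ : ∃ S, IsRainbowCut G c x y S := hc x y hxy.ne
  have hzS := hsep.mem_of_adj_of_adj hxz hzy hxS hyS
  rcases hadj hxy with h | h
  · exact Or.inl fun he => hxz.ne' (h (mem_insert_of_mem _ hzS) (mem_insert _ _) he)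
  · exact Or.inr fun he => hzy.ne (h (mem_insert_of_mem _ hzS) (mem_insert _ _) he)

end RainbowCut

section Contraction

variable {G : SimpleGraph V} {u v : V}

open Classical in
noncomputable def contractMap (huv : u ≠ v) (z : V) : {x : V // x ≠ v} :=
  if h : z = v then ⟨u, huv⟩ else ⟨z, h⟩

variable {huv : u ≠ v}

theorem contractMap_of_ne {z : V} (hz : z ≠ v) : contractMap huv z = ⟨z, hz⟩ := dif_neg hz

theorem contractMap_self : contractMap huv v = ⟨u, huv⟩ := dif_pos rfl

theorem contractMap_eq_contractMap_iff {s t : V} :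
    contractMap huv s = contractMap huv t ↔
      s = t ∨ (s = u ∨ s = v) ∧ (t = u ∨ t = v) := by
  unfold contractMap
  split_ifs <;> simp only [Subtype.mk.injEq] <;> grind

theorem contractMap_eq_contractMap_iff_of_ne {s x : V} (hxu : x ≠ u) (hxv : x ≠ v) :
    contractMap huv s = contractMap huv x ↔ s = x := by
  simp [contractMap_eq_contractMap_iff, hxu, hxv]

theorem contractMap_eq_contractMap_left_iff {s : V} :
    contractMap huv s = contractMap huv u ↔ s = u ∨ s = v := by
  simp [contractMap_eq_contractMap_iff]

theorem contractMap_eq_contractMap_right_iff {s : V} :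
    contractMap huv s = contractMap huv v ↔ s = u ∨ s = v := by
  simp only [contractMap_eq_contractMap_iff]
  tauto

theorem contractMap_left : contractMap huv u = contractMap huv v :=
  contractMap_eq_contractMap_right_iff.2 (Or.inl rfl)

theorem contractMap_injOn {T : Set V} (h : ¬ (u ∈ T ∧ v ∈ T)) :
    InjOn (contractMap huv) T := fun s hs t ht hst => by
  rcases contractMap_eq_contractMap_iff.1 hst with rfl | ⟨rfl | rfl, rfl | rfl⟩
  all_goals first | rfl | exact absurd ⟨‹_›, ‹_›⟩ h

theorem contractEdge_adj_contractMap {s t : V} (h : G.Adj s t)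
    (hst : contractMap huv s ≠ contractMap huv t) :
    (contractEdge G u v).Adj (contractMap huv s) (contractMap huv t) := by
  refine ⟨hst, ?_⟩
  by_cases hs : s = v
  · subst hs
    rw [contractMap_self, contractMap_of_ne h.ne']
    exact Or.inr (Or.inl ⟨rfl, h⟩)
  by_cases ht : t = v
  · subst ht
    rw [contractMap_self, contractMap_of_ne hs]
    exact Or.inr (Or.inr ⟨rfl, h.symm⟩)
  rw [contractMap_of_ne hs, contractMap_of_ne ht]
  exact Or.inl h

theorem exists_adj_of_contractEdge_adj {p q : {x : V // x ≠ v}}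
    (h : (contractEdge G u v).Adj p q) :
    ∃ s t, G.Adj s t ∧ contractMap huv s = p ∧ contractMap huv t = q := by
  obtain ⟨p, hp⟩ := p
  obtain ⟨q, hq⟩ := q
  rcases h.2 with hpq | ⟨rfl, hvq⟩ | ⟨rfl, hvp⟩
  · exact ⟨p, q, hpq, contractMap_of_ne hp, contractMap_of_ne hq⟩
  · exact ⟨v, q, hvq, contractMap_self, contractMap_of_ne hq⟩
  · exact ⟨p, v, hvp.symm, contractMap_of_ne hp, contractMap_self⟩

theorem contractEdge_adj_contractMap_of_ne {s t : V} (h : G.Adj s t) (htu : t ≠ u)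
    (htv : t ≠ v) : (contractEdge G u v).Adj (contractMap huv s) (contractMap huv t) :=
  contractEdge_adj_contractMap h fun hst =>
    h.ne ((contractMap_eq_contractMap_iff_of_ne htu htv).1 hst)

theorem contractEdge_adj_contractMap_iff {x y : V} (hxu : x ≠ u) (hxv : x ≠ v) (hyu : y ≠ u)
    (hyv : y ≠ v) :
    (contractEdge G u v).Adj (contractMap huv x) (contractMap huv y) ↔ G.Adj x y := by
  refine ⟨fun h => ?_, fun h => contractEdge_adj_contractMap_of_ne h hyu hyv⟩
  obtain ⟨s, t, hst, hs, ht⟩ := exists_adj_of_contractEdge_adj h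
  rwa [← (contractMap_eq_contractMap_iff_of_ne hxu hxv).1 hs,
    ← (contractMap_eq_contractMap_iff_of_ne hyu hyv).1 ht]

theorem contractMap_eq_or_adj_deleteEdges {P : SimpleGraph V} (hP : P ≤ G) {x y s t : V}
    (hover : ∀ s t, P.Adj s t →
      contractMap huv s = contractMap huv x → contractMap huv t = contractMap huv y → False)
    (h : P.Adj s t) :
    contractMap huv s = contractMap huv t ∨
      ((contractEdge G u v).deleteEdges {s(contractMap huv x, contractMap huv y)}).Adj
        (contractMap huv s) (contractMap huv t) := by
  refine or_iff_not_imp_left.2 fun hst => ?_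
  rw [deleteEdges_adj, Set.mem_singleton_iff, Sym2.eq_iff]
  refine ⟨contractEdge_adj_contractMap (hP h) hst, ?_⟩
  rintro (⟨hsx, hty⟩ | ⟨hsy, htx⟩)
  exacts [hover s t h hsx hty, hover t s h.symm htx hsy]

theorem SimpleGraph.Separates.of_contractEdge {P : SimpleGraph V} (hP : P ≤ G) {x y : V}
    (hover : ∀ s t, P.Adj s t →
      contractMap huv s = contractMap huv x → contractMap huv t = contractMap huv y → False)
    {T : Set {x : V // x ≠ v}}
    (h : ((contractEdge G u v).deleteEdges {s(contractMap huv x, contractMap huv y)}).Separates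
      (contractMap huv x) (contractMap huv y) T) :
    P.Separates x y (contractMap huv ⁻¹' T) :=
  h.comap _ fun _ _ => contractMap_eq_or_adj_deleteEdges hP hover

theorem SimpleGraph.Reachable.map_contractMap {P : SimpleGraph V} (hP : P ≤ G) {x y : V}
    (hover : ∀ s t, P.Adj s t →
      contractMap huv s = contractMap huv x → contractMap huv t = contractMap huv y → False)
    (h : P.Reachable x y) :
    ((contractEdge G u v).deleteEdges {s(contractMap huv x, contractMap huv y)}).Reachable
      (contractMap huv x) (contractMap huv y) := by
  by_contra hn
  obtain ⟨p⟩ := h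
  obtain ⟨z, -, hz⟩ :=
    Separates.of_contractEdge hP hover (T := ∅) (fun q => (hn ⟨q⟩).elim) p
  exact hz

theorem injOn_of_injOn_image_contractMap {α : Type*} {c : V → α}
    {c' : {x : V // x ≠ v} → α} {o : V} {T : Set V} (ho : o = u ∨ o = v)
    (hc : ∀ z, z ≠ o → c z = c' (contractMap huv z)) (hoT : o ∉ T)
    (h : InjOn c' (contractMap huv '' T)) : InjOn c T := by
  have huvT : ¬ (u ∈ T ∧ v ∈ T) := by
    rintro ⟨hu, hv⟩
    rcases ho with rfl | rfl
    exacts [hoT hu, hoT hv]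
  refine (h.comp (contractMap_injOn huvT) (mapsTo_image _ _)).congr fun z hz => ?_
  exact (hc z (ne_of_mem_of_not_mem hz hoT)).symm

end Contraction

section DegreeTwoEdge

variable {α : Type*} {G : SimpleGraph V} {u v : V} {huv : u ≠ v}
  {c : V → α} {c' : {x : V // x ≠ v} → α} {S' : Set {x : V // x ≠ v}}

theorem IsRainbowCut.of_contractEdge {x y k o e : V}
    (hS' : IsRainbowCut (contractEdge G u v) c' (contractMap huv x) (contractMap huv y) S')
    (ho : o = u ∨ o = v) (hk : k = u ∨ k = v) (hko : k ≠ o) (hNo : G.neighborSet o ⊆ {k, e})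
    (hco : ∀ z, z ≠ o → c z = c' (contractMap huv z))
    (hxu : x ≠ u) (hxv : x ≠ v) (hyu : y ≠ u) (hyv : y ≠ v) :
    IsRainbowCut G c x y (contractMap huv ⁻¹' S' \ {o}) := by
  obtain ⟨hxS', hyS', hsep, hadj, hnadj⟩ := hS'
  have hxo : x ≠ o := by rcases ho with rfl | rfl <;> assumption
  have hyo : y ≠ o := by rcases ho with rfl | rfl <;> assumption
  have hG : (contractEdge G u v).Adj (contractMap huv x) (contractMap huv y) ↔ G.Adj x y :=
    contractEdge_adj_contractMap_iff hxu hxv hyu hyv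
  have himage : ∀ w, contractMap huv '' insert w (contractMap huv ⁻¹' S' \ {o}) ⊆
      insert (contractMap huv w) S' := fun w => by
    rw [image_insert_eq]
    exact insert_subset_insert ((image_mono sdiff_subset).trans (image_preimage_subset _ _))
  refine ⟨fun h => hxS' h.1, fun h => hyS' h.1, ?_, fun h => ?_, fun h => ?_⟩
  · have hsep' := hsep.of_contractEdge (deleteEdges_le {s(x, y)}) fun s t hst hs ht => by
      rw [contractMap_eq_contractMap_iff_of_ne hxu hxv] at hs
      rw [contractMap_eq_contractMap_iff_of_ne hyu hyv] at ht
      subst hs ht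
      simp [deleteEdges_adj] at hst
    by_cases hu' : contractMap huv u ∈ S'
    · have hk' : k ∈ contractMap huv ⁻¹' S' := by
        rwa [mem_preimage, contractMap_eq_contractMap_left_iff.2 hk]
      exact hsep'.diff_singleton_of_neighborSet_subset hk' hko (fun z hz => hNo hz.1) hxo hyo
    · have ho' : o ∉ contractMap huv ⁻¹' S' := by
        rwa [mem_preimage, contractMap_eq_contractMap_left_iff.2 ho]
      rwa [sdiff_singleton_eq_self ho']
  · rcases hadj (hG.2 h) with hI | hI
    · exact Or.inl (injOn_of_injOn_image_contractMap ho hco (by simp [hxo.symm])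
        (hI.mono (himage x)))
    · exact Or.inr (injOn_of_injOn_image_contractMap ho hco (by simp [hyo.symm])
        (hI.mono (himage y)))
  · exact injOn_of_injOn_image_contractMap ho hco (fun h => h.2 rfl)
      ((hnadj (mt hG.1 h)).mono ((image_mono sdiff_subset).trans (image_preimage_subset _ _)))

theorem IsRainbowCut.of_contractEdge_right {y : V}
    (hS' : IsRainbowCut (contractEdge G u v) c' (contractMap huv v) (contractMap huv y) S')
    (hco : ∀ z, z ≠ v → c z = c' (contractMap huv z))
    (hyu : y ≠ u) (hyv : y ≠ v) (huy : ¬ G.Adj u y) (hvy : ¬ G.Adj v y) :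
    IsRainbowCut G c v y (contractMap huv ⁻¹' S') := by
  obtain ⟨hvS', hyS', hsep, -, hnadj⟩ := hS'
  have hover : ∀ s t, G.Adj s t →
      contractMap huv s = contractMap huv v → contractMap huv t = contractMap huv y →
      False := by
    intro s t hst hs ht
    rw [contractMap_eq_contractMap_iff_of_ne hyu hyv] at ht
    rw [contractMap_eq_contractMap_right_iff] at hs
    subst ht
    rcases hs with rfl | rfl
    exacts [huy hst, hvy hst]
  have hH : ¬ (contractEdge G u v).Adj (contractMap huv v) (contractMap huv y) := fun h => by
    obtain ⟨s, t, hst, hs, ht⟩ := exists_adj_of_contractEdge_adj h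
    exact hover s t hst hs ht
  refine ⟨hvS', hyS', hsep.of_contractEdge (deleteEdges_le _)
    fun s t hst => hover s t (deleteEdges_le _ hst), fun h => absurd h hvy, fun _ => ?_⟩
  exact injOn_of_injOn_image_contractMap (Or.inr rfl) hco hvS'
    ((hnadj hH).mono (image_preimage_subset _ _))

theorem IsRainbowCut.of_contractEdge_of_neighbor {a b : V}
    (hS' : IsRainbowCut (contractEdge G u v) c' (contractMap huv b) (contractMap huv a) S')
    (hco : ∀ z, z ≠ v → c z = c' (contractMap huv z)) (hua : G.Adj u a) (hav : a ≠ v)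
    (hv : G.neighborSet v = {u, b}) (hbu : b ≠ u) (hab : a ≠ b) (hnab : ¬ G.Adj a b) :
    IsRainbowCut G c v a (contractMap huv ⁻¹' S' \ {v}) := by
  obtain ⟨hbS', haS', hsep, -, hnadj⟩ := hS'
  have hvb : G.Adj v b := by simp [← mem_neighborSet, hv]
  have hau : a ≠ u := hua.ne'
  have hbv : b ≠ v := hvb.ne'
  have huS' : contractMap huv u ∈ S' := by
    refine hsep.mem_of_adj_of_adj ?_ (contractEdge_adj_contractMap_of_ne hua hau hav) hbS' haS'
    rw [contractMap_left]
    exact (contractEdge_adj_contractMap_of_ne hvb hbu hbv).symm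
  have hsep' : (G.deleteEdges {s(v, a)}).Separates b a (contractMap huv ⁻¹' S') :=
    hsep.of_contractEdge (deleteEdges_le _) fun s t hst hs ht => by
      rw [contractMap_eq_contractMap_iff_of_ne hbu hbv] at hs
      rw [contractMap_eq_contractMap_iff_of_ne hau hav] at ht
      subst hs ht
      exact hnab (deleteEdges_le _ hst).symm
  have hva : ¬ G.Adj v a := not_adj_of_neighborSet_eq_pair hv hau hab
  refine ⟨fun h => h.2 rfl, fun h => haS' h.1,
    hsep'.of_neighborSet_subset huS' huv (fun z hz => hv ▸ hz.1) hav, fun h => absurd h hva,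
    fun _ => injOn_of_injOn_image_contractMap (Or.inr rfl) hco (fun h => h.2 rfl) ?_⟩
  refine (hnadj fun h => hnab ?_).mono ((image_mono sdiff_subset).trans (image_preimage_subset _ _))
  exact ((contractEdge_adj_contractMap_iff hbu hbv hau hav).1 h).symm

end DegreeTwoEdge

section DegreeTwoColoring

variable {α : Type*} {G : SimpleGraph V} {u v a b : V} {huv : u ≠ v}
  {c : V → α} {c' : {x : V // x ≠ v} → α}

theorem IsRVDColoring.not_adj_of_contractEdge (hc' : IsRVDColoring (contractEdge G u v) c')
    (hua : G.Adj u a) (hav : a ≠ v) (hvb : G.Adj v b) (hbu : b ≠ u)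
    (hca : c' (contractMap huv u) = c' (contractMap huv a))
    (hcb : c' (contractMap huv u) = c' (contractMap huv b)) : ¬ G.Adj a b := fun hab => by
  have hua' := contractEdge_adj_contractMap_of_ne (huv := huv) hua hua.ne' hav
  have hub' := contractEdge_adj_contractMap_of_ne (huv := huv) hvb hbu hvb.ne'
  rw [← contractMap_left] at hub'
  rcases hc'.ne_or_ne_of_adj_of_adj hua'.symm hub'
    (contractEdge_adj_contractMap_of_ne hab hbu hvb.ne') with h | h
  exacts [h hca, h hcb]

theorem exists_isRainbowCut_right {y : V} (hu : G.neighborSet u = {v, a}) (hav : a ≠ v)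
    (hv : G.neighborSet v = {u, b}) (hbu : b ≠ u) (hab : a ≠ b)
    (hc' : IsRVDColoring (contractEdge G u v) c')
    (hcf : ∀ z, z ≠ u → z ≠ v → c z = c' (contractMap huv z)) (hva : c v ≠ c a)
    (hub : c u ≠ c b ∨ c u = c' (contractMap huv u) ∧ c u = c a) (hyu : y ≠ u)
    (hvy : v ≠ y) : ∃ S, IsRainbowCut G c v y S := by
  by_cases hub' : c u ≠ c b
  · refine ⟨_, isRainbowCut_neighborSet_of_injOn hvy ?_⟩
    rw [hv]
    exact injOn_pair.2 fun h => absurd h hub'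
  obtain ⟨hcu, hca⟩ := hub.resolve_left hub'
  have hcov : ∀ z, z ≠ v → c z = c' (contractMap huv z) := fun z hzv => by
    by_cases hzu : z = u
    · rwa [hzu]
    · exact hcf z hzu hzv
  have hua : G.Adj u a := by simp [← mem_neighborSet, hu]
  have hvb : G.Adj v b := by simp [← mem_neighborSet, hv]
  have hau : a ≠ u := hua.ne'
  have hbv : b ≠ v := hvb.ne'
  by_cases hyb : y = b
  · subst hyb
    refine ⟨_, isRainbowCut_neighborSet hvy (fun _ => Or.inl ?_) fun h => absurd hvb h⟩
    refine (injOn_pair.2 fun h => absurd h (hca ▸ hva)).mono ?_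
    rw [hv]
    exact insert_subset_insert (by simp)
  by_cases hya : y = a
  · subst hya
    have hnab : ¬ G.Adj y b := hc'.not_adj_of_contractEdge hua hav hvb hbu
      (by rw [← hcu, ← hcf y hau hav, hca])
      (by rw [← hcu, ← hcf b hbu hbv]; exact not_not.1 hub')
    obtain ⟨S', hS'⟩ : ∃ S', IsRainbowCut _ c' _ _ S' :=
      hc' (contractMap huv b) (contractMap huv y)
      (by rw [Ne, contractMap_eq_contractMap_iff_of_ne hau hav]; exact hab.symm)
    exact ⟨_, hS'.of_contractEdge_of_neighbor hcov hua hav hv hbu hab hnab⟩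
  obtain ⟨S', hS'⟩ : ∃ S', IsRainbowCut _ c' _ _ S' :=
    hc' (contractMap huv v) (contractMap huv y)
    (by rw [Ne, eq_comm, contractMap_eq_contractMap_right_iff]; tauto)
  exact ⟨_, hS'.of_contractEdge_right hcov hyu hvy.symm
    (not_adj_of_neighborSet_eq_pair hu hvy.symm hya) (not_adj_of_neighborSet_eq_pair hv hyu hyb)⟩

theorem isRVDColoring_of_contractEdge {o : V} (hu : G.neighborSet u = {v, a}) (hav : a ≠ v)
    (hv : G.neighborSet v = {u, b}) (hbu : b ≠ u) (hab : a ≠ b)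
    (hc' : IsRVDColoring (contractEdge G u v) c') (ho : o = u ∨ o = v)
    (hco : ∀ z, z ≠ o → c z = c' (contractMap huv z)) (hva : c v ≠ c a)
    (hub : c u ≠ c b ∨ c u = c' (contractMap huv u) ∧ c u = c a) : IsRVDColoring G c := by
  have hcf : ∀ z, z ≠ u → z ≠ v → c z = c' (contractMap huv z) := fun z hzu hzv =>
    hco z (by rcases ho with rfl | rfl <;> assumption)
  have hleft : ∀ y, u ≠ y → ∃ S, IsRainbowCut G c u y S := fun y hy =>
    ⟨_, isRainbowCut_neighborSet_of_injOn hy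
      (by rw [hu]; exact injOn_pair.2 fun h => absurd h hva)⟩
  have hend : ∀ x y, x ≠ y → (x = u ∨ x = v) → ∃ S, IsRainbowCut G c x y S := by
    rintro x y hxy (rfl | rfl)
    · exact hleft y hxy
    by_cases hyu : y = u
    · obtain ⟨S, hS⟩ := hleft x (hyu ▸ hxy.symm)
      exact ⟨S, hyu ▸ hS.symm⟩
    · exact exists_isRainbowCut_right hu hav hv hbu hab hc' hcf hva hub hyu hxy
  intro x y hxy
  by_cases hx : x = u ∨ x = v
  · exact hend x y hxy hx
  by_cases hy : y = u ∨ y = v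
  · obtain ⟨S, hS⟩ := hend y x hxy.symm hy
    exact ⟨S, hS.symm⟩
  push Not at hx hy
  obtain ⟨S', hS'⟩ : ∃ S', IsRainbowCut _ c' _ _ S' :=
    hc' (contractMap huv x) (contractMap huv y)
    (by rw [Ne, contractMap_eq_contractMap_iff_of_ne hy.1 hy.2]; exact hxy)
  obtain ⟨k, e, hk, hko, hNo⟩ :
      ∃ k e, (k = u ∨ k = v) ∧ k ≠ o ∧ G.neighborSet o ⊆ {k, e} := by
    rcases ho with rfl | rfl
    exacts [⟨v, a, Or.inr rfl, huv.symm, hu.le⟩, ⟨u, b, Or.inl rfl, huv, hv.le⟩]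
  exact ⟨_, hS'.of_contractEdge ho hk hko hNo hco hx.1 hx.2 hy.1 hy.2⟩

theorem exists_isRVDColoring_of_contractEdge [Nontrivial α] (hu : G.neighborSet u = {v, a})
    (hav : a ≠ v) (hv : G.neighborSet v = {u, b}) (hbu : b ≠ u) (hab : a ≠ b)
    (hc' : IsRVDColoring (contractEdge G u v) c') : ∃ c : V → α, IsRVDColoring G c := by
  classical
  have huv : u ≠ v := (show G.Adj u v by simp [← mem_neighborSet, hu]).ne
  have hau : a ≠ u := (show G.Adj u a by simp [← mem_neighborSet, hu]).ne'
  have hbv : b ≠ v := (show G.Adj v b by simp [← mem_neighborSet, hv]).ne'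
  by_cases h : c' (contractMap huv u) ≠ c' (contractMap huv b) ∨
      c' (contractMap huv u) = c' (contractMap huv a)
  · obtain ⟨δ, hδ⟩ := exists_ne (c' (contractMap huv a))
    refine ⟨update (c' ∘ contractMap huv) v δ,
      isRVDColoring_of_contractEdge hu hav hv hbu hab hc' (Or.inr rfl)
        (fun z hz => update_of_ne hz _ _) ?_ ?_⟩
    · simpa [update_of_ne hav] using hδ
    · simpa [update_of_ne huv, update_of_ne hbv, update_of_ne hav] using h
  · push Not at h
    obtain ⟨γ, hγ⟩ := exists_ne (c' (contractMap huv b))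
    refine ⟨update (c' ∘ contractMap huv) u γ,
      isRVDColoring_of_contractEdge hu hav hv hbu hab hc' (Or.inl rfl)
        (fun z hz => update_of_ne hz _ _) ?_ (Or.inl ?_)⟩
    · simpa [update_of_ne huv.symm, update_of_ne hau, ← contractMap_left] using h.2
    · simpa [update_of_ne hbu] using hγ

theorem IsRVDColoring.nontrivial_of_contractEdge [Fintype V] (h : TwoConnected G)
    (hu : G.neighborSet u = {v, a}) (hav : a ≠ v)
    (hv : G.neighborSet v = {u, b}) (hab : a ≠ b) (hc' : IsRVDColoring (contractEdge G u v) c') :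
    Nontrivial α := by
  have huv : G.Adj u v := by simp [← mem_neighborSet, hu]
  have hua : G.Adj u a := by simp [← mem_neighborSet, hu]
  have hva : ¬ G.Adj v a := not_adj_of_neighborSet_eq_pair hv hua.ne' hab
  refine hc'.nontrivial (contractEdge_adj_contractMap_of_ne (huv := huv.ne) hua hua.ne' hav)
    ((h.reachable_deleteEdges huv hav.symm hua.ne).map_contractMap (deleteEdges_le _) ?_)
  intro s t hst hs ht
  rw [contractMap_eq_contractMap_iff_of_ne hua.ne' hav] at ht
  rw [contractMap_eq_contractMap_left_iff] at hs
  subst ht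
  rcases hs with rfl | rfl
  · simp [deleteEdges_adj] at hst
  · exact hva (deleteEdges_le _ hst)

end DegreeTwoColoring

theorem rvd_le_rvd_contract_general [Fintype V] (G : SimpleGraph V)
    [DecidableRel G.Adj] (hn : 4 ≤ Fintype.card V) (h2c : TwoConnected G)
    (u v : V) (huv : G.Adj u v) (hdu : G.degree u = 2) (hdv : G.degree v = 2) :
    rvd G ≤ rvd (contractEdge G u v) := by
  classical
  obtain ⟨a, hav, hu⟩ := exists_neighborSet_eq_pair hdu huv
  obtain ⟨b, hbu, hv⟩ := exists_neighborSet_eq_pair hdv huv.symm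
  have hab : a ≠ b := h2c.ne_of_neighborSet_eq_pair hn hu hv
  obtain ⟨c', hc'⟩ : ∃ c' : {x : V // x ≠ v} → Fin (rvd (contractEdge G u v)),
      IsRVDColoring (contractEdge G u v) c' :=
    Nat.sInf_mem (s := {n | ∃ c : _ → Fin n, IsRVDColoring (contractEdge G u v) c})
      ⟨_, _, IsRVDColoring.of_injective (Fintype.equivFin _).injective⟩
  have := hc'.nontrivial_of_contractEdge h2c hu hav hv hab
  obtain ⟨c, hc⟩ := exists_isRVDColoring_of_contractEdge hu hav hv hbu hab hc'
  exact Nat.sInf_le ⟨c, hc⟩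

/-- If `G` is a 2-connected graph of order `n ≥ 4` with two adjacent
vertices `u, v` of degree 2, then `rvd(G) ≤ rvd(G/uv)`. -/
theorem rvd_le_rvd_contract [Fintype V] [DecidableEq V] (G : SimpleGraph V)
    [DecidableRel G.Adj] (hn : 4 ≤ Fintype.card V) (h2c : TwoConnected G)
    (u v : V) (huv : G.Adj u v) (hdu : G.degree u = 2) (hdv : G.degree v = 2) :
    rvd G ≤ rvd (contractEdge G u v) :=
  rvd_le_rvd_contract_general G hn h2c u v huv hdu hdv
end

section
/- Let G be a nontrivial connected graph. Then rvd(G) = 1 if and only if G is a tree. -/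
open SimpleGraph

variable {V : Type*}

lemma Set.InjOn.eq_empty_of_insert {α : Type*} [Subsingleton α] {c : V → α} {x : V}
    {S : Set V} (hx : x ∉ S) (hc : Set.InjOn c (insert x S)) : S = ∅ :=
  Set.eq_empty_of_forall_notMem fun _ hs =>
    hx (hc (Set.mem_insert_of_mem x hs) (Set.mem_insert x S) (Subsingleton.elim _ _) ▸ hs)

namespace SimpleGraph

variable {G : SimpleGraph V}

/-- With a single color the cut of an edge `xy` must be empty, so `xy` is a bridge. -/
lemma IsRVDColoring.isAcyclic {α : Type*} [Subsingleton α] {c : V → α}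
    (hc : IsRVDColoring G c) : G.IsAcyclic := by
  refine isAcyclic_iff_forall_adj_isBridge.mpr fun x y hxy => isBridge_iff.mpr ?_
  obtain ⟨S, hxS, hyS, hcut, hrainbow, -⟩ := hc x y hxy.ne
  have hS : S = ∅ := (hrainbow hxy).elim (·.eq_empty_of_insert hxS) (·.eq_empty_of_insert hyS)
  rintro ⟨p⟩
  obtain ⟨v, -, hv⟩ := hcut p
  exact Set.notMem_empty v (hS ▸ hv)

/-- In a forest, the second vertex of the `x`-`y` path lies on every `x`-`y` walk. -/
lemma IsAcyclic.exists_mem_support_of_not_adj (hG : G.IsAcyclic) {x y : V} (hne : x ≠ y)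
    (hxy : ¬ G.Adj x y) (hreach : G.Reachable x y) :
    ∃ v, v ≠ x ∧ v ≠ y ∧ ∀ p : G.Walk x y, v ∈ p.support := by
  classical
  obtain ⟨q⟩ := hreach
  have hq : ¬ q.toPath.1.Nil := Walk.not_nil_of_ne hne
  have hadj : G.Adj x q.toPath.1.snd := Walk.adj_snd hq
  refine ⟨_, hadj.ne', fun h => hxy (h ▸ hadj), fun p => ?_⟩
  rw [(hG.subsingleton_path x y).elim q.toPath p.toPath]
  exact p.support_toPath_subset_support (Walk.getVert_mem_support _ 1)

lemma IsAcyclic.isRVDColoring {α : Type*} (hG : G.IsAcyclic) (c : V → α) :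
    IsRVDColoring G c := by
  intro x y hne
  by_cases hxy : G.Adj x y
  · have hbridge := isBridge_iff.mp (isAcyclic_iff_forall_adj_isBridge.mp hG hxy)
    refine ⟨∅, id, id, fun p => (hbridge ⟨p⟩).elim, fun _ => ?_, (absurd hxy ·)⟩
    simp
  by_cases hreach : G.Reachable x y
  · obtain ⟨v, hvx, hvy, hv⟩ := hG.exists_mem_support_of_not_adj hne hxy hreach
    refine ⟨{v}, hvx.symm, hvy.symm, fun p => ⟨v, ?_, rfl⟩, (absurd · hxy),
      fun _ => Set.injOn_singleton c v⟩
    simpa using hv (p.mapLe (G.deleteEdges_le _))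
  · exact ⟨∅, id, id, fun p => (hreach ⟨p.mapLe (G.deleteEdges_le _)⟩).elim,
      (absurd · hxy), fun _ => Set.injOn_empty c⟩

lemma rvd_eq_one_iff [Nonempty V] :
    rvd G = 1 ↔ ∃ c : V → Fin 1, IsRVDColoring G c :=
  ⟨fun h => h ▸ Nat.sInf_mem (Nat.nonempty_of_sInf_eq_succ h),
    fun h => le_antisymm (Nat.sInf_le h)
      (le_csInf ⟨1, h⟩ fun _ ⟨c, _⟩ => (c (Classical.arbitrary V)).pos)⟩

end SimpleGraph

theorem rvd_eq_one_iff_isTree_general (G : SimpleGraph V)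
    (hconn : G.Connected) :
    rvd G = 1 ↔ G.IsTree := by
  have := hconn.nonempty
  rw [rvd_eq_one_iff]
  constructor
  · rintro ⟨_, hc⟩
    exact ⟨hconn, hc.isAcyclic⟩
  · intro hT
    exact ⟨fun _ => 0, hT.isAcyclic.isRVDColoring _⟩

/-- For a nontrivial connected graph `G`, `rvd(G) = 1` iff `G` is a tree. -/
theorem rvd_eq_one_iff_isTree [Fintype V] (G : SimpleGraph V)
    (hconn : G.Connected) (hnontrivial : 1 < Fintype.card V) :
    rvd G = 1 ↔ G.IsTree :=
  rvd_eq_one_iff_isTree_general G hconn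
end

section
/- Let G be a nontrivial connected graph, and let B be a block of G such that rvd(B) is maximum among all blocks of G. Then rvd(G) = rvd(B). -/
open SimpleGraph

variable {V : Type*}

/-!
Blocks are induced subgraphs and `rvd` is monotone under induced subgraphs, so `rvd B ≤ rvd G`.
Conversely, a graph that is not a block splits along a cut vertex `w` (or, if it is disconnected,
along no vertex at all) into induced subgraphs on smaller sets `P`, `Q` with `P ∩ Q ⊆ {w}` and no
edge between `P \ Q` and `Q \ P`. Colorings of the two pieces, with the colors of one permuted so
that they agree at `w`, glue to a coloring of the whole graph: a pair inside one piece keeps its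
cut, since a path between two vertices of `P` never leaves `P`, and a pair split between the pieces
is separated by `P ∩ Q`. Induction on the vertex set bounds `rvd G` by the largest `rvd` of a block.
-/

structure IsRainbowVertexCut {α : Type*} (G : SimpleGraph V) (c : V → α) (x y : V) (S : Set V) :
    Prop where
  left_notMem : x ∉ S
  right_notMem : y ∉ S
  meets_walk : ∀ p : (G.deleteEdges {s(x, y)}).Walk x y, ∃ v ∈ p.support, v ∈ S
  injOn_of_adj : G.Adj x y → Set.InjOn c (insert x S) ∨ Set.InjOn c (insert y S)
  injOn_of_not_adj : ¬ G.Adj x y → Set.InjOn c S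

section RainbowVertexCut

variable {U W α β : Type*}

theorem isRVDColoring_iff {G : SimpleGraph U} {c : U → α} :
    IsRVDColoring G c ↔ ∀ x y, x ≠ y → ∃ S, IsRainbowVertexCut G c x y S := by
  refine forall₂_congr fun x y => imp_congr_right fun _ => exists_congr fun S => ?_
  exact ⟨fun ⟨h₁, h₂, h₃, h₄, h₅⟩ => ⟨h₁, h₂, h₃, h₄, h₅⟩,
    fun ⟨h₁, h₂, h₃, h₄, h₅⟩ => ⟨h₁, h₂, h₃, h₄, h₅⟩⟩

theorem IsRainbowVertexCut.comp_injective {G : SimpleGraph U} {c : U → α} {x y : U} {S : Set U}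
    (h : IsRainbowVertexCut G c x y S) {f : α → β} (hf : Function.Injective f) :
    IsRainbowVertexCut G (f ∘ c) x y S where
  left_notMem := h.left_notMem
  right_notMem := h.right_notMem
  meets_walk := h.meets_walk
  injOn_of_adj hxy := (h.injOn_of_adj hxy).imp (hf.comp_injOn ·) (hf.comp_injOn ·)
  injOn_of_not_adj hxy := hf.comp_injOn (h.injOn_of_not_adj hxy)

theorem IsRVDColoring.comp_injective {G : SimpleGraph U} {c : U → α} (hc : IsRVDColoring G c)
    {f : α → β} (hf : Function.Injective f) : IsRVDColoring G (f ∘ c) := by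
  rw [isRVDColoring_iff] at hc ⊢
  exact fun x y hxy => (hc x y hxy).imp fun _ hS => hS.comp_injective hf

/-- With all colors distinct, everything but `x` and `y` is a rainbow `x`–`y` cut. -/
theorem isRVDColoring_of_injective (G : SimpleGraph U) {c : U → α} (hc : Function.Injective c) :
    IsRVDColoring G c := by
  rw [isRVDColoring_iff]
  intro x y hxy
  refine ⟨{x, y}ᶜ, ⟨by simp, by simp, fun p => ?_, fun _ => Or.inl hc.injOn, fun _ => hc.injOn⟩⟩
  cases p with
  | nil => exact absurd rfl hxy
  | @cons _ b _ h q =>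
    refine ⟨b, by simp [q.start_mem_support], ?_⟩
    rw [deleteEdges_adj, Set.mem_singleton_iff] at h
    simp only [Set.mem_compl_iff, Set.mem_insert_iff, Set.mem_singleton_iff, not_or]
    exact ⟨fun hb => h.1.ne hb.symm, fun hb => h.2 (hb ▸ rfl)⟩

theorem exists_isRVDColoring_of_rvd_le [Finite U] (G : SimpleGraph U) {k : ℕ} (h : rvd G ≤ k) :
    ∃ c : U → Fin k, IsRVDColoring G c := by
  have hne : {n | ∃ c : U → Fin n, IsRVDColoring G c}.Nonempty :=
    ⟨_, Finite.equivFin U, isRVDColoring_of_injective G (Finite.equivFin U).injective⟩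
  obtain ⟨c, hc⟩ := Nat.sInf_mem hne
  exact ⟨Fin.castLE h ∘ c, hc.comp_injective (Fin.castLE_injective h)⟩

theorem rvd_eq_zero_of_isEmpty [IsEmpty U] (G : SimpleGraph U) : rvd G = 0 :=
  Nat.eq_zero_of_le_zero <| Nat.sInf_le ⟨isEmptyElim, fun x => isEmptyElim x⟩

theorem IsRainbowVertexCut.comap {G : SimpleGraph U} {G' : SimpleGraph W} (e : G ↪g G')
    {c : W → α} {x y : U} {S : Set W} (h : IsRainbowVertexCut G' c (e x) (e y) S) :
    IsRainbowVertexCut G (c ∘ e) x y (e ⁻¹' S) where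
  left_notMem := h.left_notMem
  right_notMem := h.right_notMem
  meets_walk p := by
    let f : G.deleteEdges {s(x, y)} →g G'.deleteEdges {s(e x, e y)} :=
      ⟨e, fun {a b} hab => by
        simp only [deleteEdges_adj, Set.mem_singleton_iff] at hab ⊢
        refine ⟨e.map_adj_iff.mpr hab.1, fun hab' => hab.2 ?_⟩
        rwa [← Sym2.map_mk, ← Sym2.map_mk, (Sym2.map.injective e.injective).eq_iff]
          at hab'⟩
    obtain ⟨v, hv, hvS⟩ := h.meets_walk (p.map f)
    obtain ⟨a, ha, rfl⟩ := List.mem_map.mp (Walk.support_map f p ▸ hv)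
    exact ⟨a, ha, hvS⟩
  injOn_of_adj hxy := by
    refine (h.injOn_of_adj (e.map_adj_iff.mpr hxy)).imp ?_ ?_ <;> intro hc <;>
      refine hc.comp e.injective.injOn ?_ <;> simp [Set.MapsTo]
  injOn_of_not_adj hxy :=
    (h.injOn_of_not_adj (mt e.map_adj_iff.mp hxy)).comp e.injective.injOn (Set.mapsTo_preimage _ _)

theorem IsRVDColoring.comap {G : SimpleGraph U} {G' : SimpleGraph W} (e : G ↪g G') {c : W → α}
    (hc : IsRVDColoring G' c) : IsRVDColoring G (c ∘ e) := by
  rw [isRVDColoring_iff] at hc ⊢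
  intro x y hxy
  obtain ⟨S, hS⟩ := hc (e x) (e y) (e.injective.ne hxy)
  exact ⟨_, hS.comap e⟩

theorem rvd_le_of_isIndContained [Finite W] {G : SimpleGraph U} {G' : SimpleGraph W}
    (h : G ⊴ G') : rvd G ≤ rvd G' := by
  obtain ⟨e⟩ := h
  obtain ⟨c, hc⟩ := exists_isRVDColoring_of_rvd_le G' le_rfl
  exact Nat.sInf_le ⟨c ∘ e, hc.comap e⟩

end RainbowVertexCut

section Block

variable {G : SimpleGraph V}

theorem HasNoCutVertex.mono {W : Type*} {H H' : SimpleGraph W} (hle : H ≤ H')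
    (h : HasNoCutVertex H) : HasNoCutVertex H' :=
  fun w => (h w).mono fun _ _ hab => hle hab

theorem isBlock_iff_maximal {B : G.Subgraph} :
    IsBlock G B ↔ Maximal (fun H : G.Subgraph => H.coe.Connected ∧ HasNoCutVertex H.coe) B :=
  ⟨fun ⟨hc, hn, hmax⟩ => ⟨⟨hc, hn⟩, fun H ⟨hc', hn'⟩ hle => (hmax H hle hc' hn').le⟩,
    fun ⟨⟨hc, hn⟩, hmax⟩ => ⟨hc, hn, fun _ hle hc' hn' => le_antisymm (hmax ⟨hc', hn'⟩ hle) hle⟩⟩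

theorem exists_isBlock_le [Finite V] {H : G.Subgraph} (hc : H.coe.Connected)
    (hn : HasNoCutVertex H.coe) : ∃ B, IsBlock G B ∧ H ≤ B := by
  obtain ⟨B, hle, hB⟩ := Finite.exists_le_maximal
    (p := fun H : G.Subgraph => H.coe.Connected ∧ HasNoCutVertex H.coe) ⟨hc, hn⟩
  exact ⟨B, isBlock_iff_maximal.mpr hB, hle⟩

/-- Adding to a block the edges of `G` among its vertices keeps it connected and free of cut
vertices, so by maximality a block is an induced subgraph. -/
theorem IsBlock.isInduced {B : G.Subgraph} (hB : IsBlock G B) : B.IsInduced := by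
  have hle : B ≤ (⊤ : G.Subgraph).induce B.verts := Subgraph.le_induce_top_verts
  have hcoe : B.coe ≤ ((⊤ : G.Subgraph).induce B.verts).coe := fun _ _ hab => hle.2 hab
  rw [← hB.2.2 _ hle (hB.1.mono hcoe) (hB.2.1.mono hcoe)]
  exact (Subgraph.isInduced_iff_exists_eq_induce_top _).mpr ⟨_, rfl⟩

theorem IsBlock.induce_isIndContained {B : G.Subgraph} (hB : IsBlock G B) {A : Set V}
    (hA : A ⊆ B.verts) : G.induce A ⊴ B.coe :=
  ⟨⟨⟨fun a => ⟨a, hA a.2⟩, fun _ _ hab => Subtype.ext (Subtype.mk.inj hab)⟩, hB.isInduced.adj⟩⟩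

end Block

theorem Set.exists_comp_val_eq_of_inter_subsingleton {U α : Type*} {P Q : Set U}
    (hPQ : P ∪ Q = Set.univ) (hsub : (P ∩ Q).Subsingleton) (f : P → α) (g : Q → α) :
    ∃ (c : U → α) (σ : Equiv.Perm α), c ∘ (↑) = f ∧ c ∘ (↑) = σ ∘ g := by
  classical
  obtain ⟨σ, hσ⟩ :
      ∃ σ : Equiv.Perm α, ∀ w (hP : w ∈ P) (hQ : w ∈ Q), σ (g ⟨w, hQ⟩) = f ⟨w, hP⟩ := by
    by_cases hne : (P ∩ Q).Nonempty
    · obtain ⟨w, hwP, hwQ⟩ := hne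
      refine ⟨Equiv.swap (g ⟨w, hwQ⟩) (f ⟨w, hwP⟩), fun w' hP hQ => ?_⟩
      obtain rfl : w' = w := hsub ⟨hP, hQ⟩ ⟨hwP, hwQ⟩
      exact Equiv.swap_apply_left _ _
    · exact ⟨1, fun w hP hQ => absurd ⟨w, hP, hQ⟩ hne⟩
  have hQ {v : U} (hv : v ∉ P) : v ∈ Q := (hPQ ▸ Set.mem_univ v : v ∈ P ∪ Q).resolve_left hv
  refine ⟨fun v => if hv : v ∈ P then f ⟨v, hv⟩ else σ (g ⟨v, hQ hv⟩), σ, ?_, ?_⟩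
  · funext ⟨v, hv⟩
    exact dif_pos hv
  · funext ⟨v, hv⟩
    by_cases hvP : v ∈ P
    · exact (dif_pos hvP).trans (hσ v hvP hv).symm
    · exact dif_neg hvP

structure IsOneSeparation {U : Type*} (H : SimpleGraph U) (P Q : Set U) : Prop where
  union_eq_univ : P ∪ Q = Set.univ
  inter_subsingleton : (P ∩ Q).Subsingleton
  not_adj : ∀ a ∈ P \ Q, ∀ b ∈ Q \ P, ¬ H.Adj a b

namespace IsOneSeparation

variable {U : Type*} {H : SimpleGraph U} {P Q : Set U}

theorem symm (h : IsOneSeparation H P Q) : IsOneSeparation H Q P where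
  union_eq_univ := Set.union_comm P Q ▸ h.union_eq_univ
  inter_subsingleton := Set.inter_comm P Q ▸ h.inter_subsingleton
  not_adj a ha b hb hab := h.not_adj b hb a ha hab.symm

theorem mono (h : IsOneSeparation H P Q) {H' : SimpleGraph U} (hle : H' ≤ H) :
    IsOneSeparation H' P Q :=
  ⟨h.union_eq_univ, h.inter_subsingleton, fun a ha b hb hab => h.not_adj a ha b hb (hle hab)⟩

theorem mem_right_of_notMem_left (h : IsOneSeparation H P Q) {a : U} (ha : a ∉ P) : a ∈ Q :=
  (h.union_eq_univ ▸ Set.mem_univ a : a ∈ P ∪ Q).resolve_left ha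

theorem mem_right_of_adj (h : IsOneSeparation H P Q) {a b : U} (hab : H.Adj a b) (ha : a ∈ P)
    (hb : b ∉ P) : a ∈ Q := by
  by_contra haQ
  exact h.not_adj a ⟨ha, haQ⟩ b ⟨h.mem_right_of_notMem_left hb, hb⟩ hab

theorem exists_mem_inter_of_walk (h : IsOneSeparation H P Q) {x y : U} (p : H.Walk x y)
    (hx : x ∈ P) (hy : y ∉ P) : ∃ v ∈ p.support, v ∈ P ∩ Q := by
  obtain ⟨d, hd, hfst, hsnd⟩ := p.exists_boundary_dart P hx hy
  exact ⟨d.fst, p.dart_fst_mem_support_of_mem_darts hd, hfst, h.mem_right_of_adj d.adj hfst hsnd⟩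

/-- A path leaving `P` would have to pass twice through the single vertex of `P ∩ Q`. -/
theorem mem_of_isPath (h : IsOneSeparation H P Q) {x y : U} (p : H.Walk x y) (hp : p.IsPath)
    (hx : x ∈ P) (hy : y ∈ P) : ∀ v ∈ p.support, v ∈ P := by
  induction p with
  | nil => simpa using hx
  | @cons x b y hxb q ih =>
    rw [Walk.cons_isPath_iff] at hp
    by_cases hb : b ∈ P
    · simpa [hx] using ih hp.1 hb hy
    · obtain ⟨w, hwq, hwP, hwQ⟩ := h.exists_mem_inter_of_walk q.reverse hy hb
      have hxw : x = w := h.inter_subsingleton ⟨hx, h.mem_right_of_adj hxb hx hb⟩ ⟨hwP, hwQ⟩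
      rw [Walk.support_reverse, List.mem_reverse, ← hxw] at hwq
      exact absurd hwq hp.2

theorem isRainbowVertexCut_image (h : IsOneSeparation H P Q) {α : Type*} {c : U → α} {x y : U}
    (hx : x ∈ P) (hy : y ∈ P) {S : Set P}
    (hS : IsRainbowVertexCut (H.induce P) (c ∘ (↑)) ⟨x, hx⟩ ⟨y, hy⟩ S) :
    IsRainbowVertexCut H c x y ((↑) '' S) where
  left_notMem := by
    rintro ⟨_, hs, rfl⟩
    exact hS.left_notMem hs
  right_notMem := by
    rintro ⟨_, hs, rfl⟩
    exact hS.right_notMem hs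
  meets_walk p := by
    classical
    have hP := (h.mono (deleteEdges_le _)).mem_of_isPath p.bypass p.bypass_isPath hx hy
    let f : (H.deleteEdges {s(x, y)}).induce P →g
        (H.induce P).deleteEdges {s(⟨x, hx⟩, ⟨y, hy⟩)} :=
      ⟨id, fun {a b} hab => by
        simp only [comap_adj, deleteEdges_adj, Set.mem_singleton_iff] at hab ⊢
        exact ⟨hab.1, fun hxy => hab.2 (by simpa using congrArg (Sym2.map Subtype.val) hxy)⟩⟩
    obtain ⟨z, hz, hzS⟩ := hS.meets_walk ((p.bypass.induce P hP).map f)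
    obtain ⟨v, hv, rfl⟩ : ∃ v, ∃ (hv : v ∈ p.bypass.support), ⟨v, hP v hv⟩ = z := by
      simpa [f] using hz
    exact ⟨v, p.support_bypass_subset_support hv, _, hzS, rfl⟩
  injOn_of_adj hxy := by
    refine (hS.injOn_of_adj hxy).imp (fun hi => ?_) (fun hi => ?_) <;>
      simpa [Set.image_insert_eq] using hi.image_of_comp
  injOn_of_not_adj hxy := (hS.injOn_of_not_adj hxy).image_of_comp

theorem isRainbowVertexCut_inter (h : IsOneSeparation H P Q) {α : Type*} (c : U → α) {x y : U}
    (hx : x ∈ P \ Q) (hy : y ∈ Q \ P) : IsRainbowVertexCut H c x y (P ∩ Q) where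
  left_notMem hx' := hx.2 hx'.2
  right_notMem hy' := hy.2 hy'.1
  meets_walk p := (h.mono (deleteEdges_le _)).exists_mem_inter_of_walk p hx.1 hy.2
  injOn_of_adj hxy := absurd hxy (h.not_adj x hx y hy)
  injOn_of_not_adj _ := h.inter_subsingleton.injOn c

theorem isRVDColoring (h : IsOneSeparation H P Q) {α : Type*} {c : U → α}
    (hP : IsRVDColoring (H.induce P) (c ∘ (↑))) (hQ : IsRVDColoring (H.induce Q) (c ∘ (↑))) :
    IsRVDColoring H c := by
  rw [isRVDColoring_iff] at hP hQ ⊢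
  intro x y hxy
  have hne {R : Set U} (hx : x ∈ R) (hy : y ∈ R) : (⟨x, hx⟩ : R) ≠ ⟨y, hy⟩ :=
    fun h => hxy (Subtype.mk.inj h)
  by_cases hPP : x ∈ P ∧ y ∈ P
  · obtain ⟨S, hS⟩ := hP _ _ (hne hPP.1 hPP.2)
    exact ⟨_, h.isRainbowVertexCut_image hPP.1 hPP.2 hS⟩
  by_cases hQQ : x ∈ Q ∧ y ∈ Q
  · obtain ⟨S, hS⟩ := hQ _ _ (hne hQQ.1 hQQ.2)
    exact ⟨_, h.symm.isRainbowVertexCut_image hQQ.1 hQQ.2 hS⟩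
  by_cases hxP : x ∈ P
  · have hyP : y ∉ P := fun hyP => hPP ⟨hxP, hyP⟩
    have hyQ := h.mem_right_of_notMem_left hyP
    exact ⟨_, h.isRainbowVertexCut_inter c ⟨hxP, fun hxQ => hQQ ⟨hxQ, hyQ⟩⟩ ⟨hyQ, hyP⟩⟩
  · have hxQ := h.mem_right_of_notMem_left hxP
    have hyQ : y ∉ Q := fun hyQ => hQQ ⟨hxQ, hyQ⟩
    have hyP := h.symm.mem_right_of_notMem_left hyQ
    exact ⟨_, h.symm.isRainbowVertexCut_inter c ⟨hxQ, hxP⟩ ⟨hyP, hyQ⟩⟩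

theorem rvd_le [Finite U] (h : IsOneSeparation H P Q) {k : ℕ} (hP : rvd (H.induce P) ≤ k)
    (hQ : rvd (H.induce Q) ≤ k) : rvd H ≤ k := by
  obtain ⟨cP, hcP⟩ := exists_isRVDColoring_of_rvd_le _ hP
  obtain ⟨cQ, hcQ⟩ := exists_isRVDColoring_of_rvd_le _ hQ
  obtain ⟨c, σ, hP, hQ⟩ :=
    Set.exists_comp_val_eq_of_inter_subsingleton h.union_eq_univ h.inter_subsingleton cP cQ
  refine Nat.sInf_le ⟨c, h.isRVDColoring (hP ▸ hcP) ?_⟩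
  rw [hQ]
  exact hcQ.comp_injective σ.injective

end IsOneSeparation

section Separation

variable {U : Type*} {H : SimpleGraph U}

theorem exists_isOneSeparation_of_not_reachable {W : Set U} (hW : W.Subsingleton) {u v : U}
    (hu : u ∉ W) (hv : v ∉ W) (huv : ¬ (H.induce Wᶜ).Reachable ⟨u, hu⟩ ⟨v, hv⟩) :
    ∃ P Q, IsOneSeparation H P Q ∧ u ∉ Q ∧ v ∉ P := by
  set P := W ∪ {a | ∃ ha : a ∉ W, (H.induce Wᶜ).Reachable ⟨u, hu⟩ ⟨a, ha⟩}
  refine ⟨P, W ∪ Pᶜ, ⟨?_, hW.anti ?_, ?_⟩, ?_, ?_⟩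
  · exact Set.eq_univ_of_forall fun a => (em (a ∈ P)).imp id (Or.inr ·)
  · rintro a ⟨haP, haW | haP'⟩
    exacts [haW, absurd haP haP']
  · rintro a ⟨haP, haQ⟩ b ⟨-, hbP⟩ hab
    simp only [P, Set.mem_union, Set.mem_compl_iff, Set.mem_ofPred_eq, not_or,
      not_exists] at haP haQ hbP
    obtain ⟨haW, -⟩ := haQ
    obtain ⟨hbW, hbR⟩ := hbP
    obtain ⟨_, hr⟩ := haP.resolve_left haW
    exact hbR hbW (hr.trans (Adj.reachable (G := H.induce Wᶜ) hab))
  · rintro (huW | huP)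
    exacts [hu huW, huP (Or.inr ⟨hu, Reachable.refl _⟩)]
  · rintro (hvW | ⟨_, hr⟩)
    exacts [hv hvW, huv hr]

theorem exists_isOneSeparation [Nonempty U] (h : ¬ (H.Connected ∧ HasNoCutVertex H)) :
    ∃ P Q, IsOneSeparation H P Q ∧ (∃ u, u ∉ Q) ∧ ∃ v, v ∉ P := by
  by_cases hpre : H.Preconnected
  · have hcut : ¬ HasNoCutVertex H := fun hn => h ⟨⟨hpre⟩, hn⟩
    simp only [HasNoCutVertex, Preconnected, not_forall] at hcut
    obtain ⟨w, u, v, huv⟩ := hcut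
    obtain ⟨P, Q, hs, hu, hv⟩ :=
      exists_isOneSeparation_of_not_reachable Set.subsingleton_singleton u.2 v.2 huv
    exact ⟨P, Q, hs, ⟨_, hu⟩, _, hv⟩
  · simp only [Preconnected, not_forall] at hpre
    obtain ⟨u, v, huv⟩ := hpre
    obtain ⟨P, Q, hs, hu, hv⟩ := exists_isOneSeparation_of_not_reachable
      (H := H) Set.subsingleton_empty (Set.notMem_empty u) (Set.notMem_empty v)
      (fun hr => huv (hr.map (Embedding.induce _).toHom))
    exact ⟨P, Q, hs, ⟨_, hu⟩, _, hv⟩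

end Separation

theorem isIndContained_induce_image_val (G : SimpleGraph V) (A : Set V) (P : Set A) :
    (G.induce A).induce P ⊴ G.induce (Subtype.val '' P) :=
  ⟨⟨⟨fun a => ⟨a.1.1, a.1, a.2, rfl⟩,
      fun _ _ hab => Subtype.ext (Subtype.ext (Subtype.mk.inj hab))⟩, Iff.rfl⟩⟩

theorem rvd_induce_le_of_forall [Finite V] (G : SimpleGraph V) {k : ℕ}
    (h : ∀ A : Set V, (G.induce A).Connected → HasNoCutVertex (G.induce A) → rvd (G.induce A) ≤ k)
    (A : Set V) : rvd (G.induce A) ≤ k := by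
  induction A using WellFoundedLT.induction with
  | _ A ih =>
  rcases isEmpty_or_nonempty A with hA | hA
  · exact (rvd_eq_zero_of_isEmpty _).trans_le (Nat.zero_le k)
  by_cases hb : (G.induce A).Connected ∧ HasNoCutVertex (G.induce A)
  · exact h A hb.1 hb.2
  have hpiece {R : Set A} (w : A) (hw : w ∉ R) : rvd ((G.induce A).induce R) ≤ k := by
    refine (rvd_le_of_isIndContained (isIndContained_induce_image_val G A R)).trans (ih _ ?_)
    refine (Set.ssubset_iff_of_subset (Subtype.coe_image_subset A R)).mpr ⟨w, w.2, ?_⟩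
    rwa [Subtype.val_injective.mem_set_image]
  obtain ⟨P, Q, hsep, ⟨u, hu⟩, v, hv⟩ := exists_isOneSeparation hb
  exact hsep.rvd_le (hpiece v hv) (hpiece u hu)

theorem rvd_eq_rvd_maxBlock_general [Fintype V] (G : SimpleGraph V)
    (B : G.Subgraph) (hB : IsBlock G B)
    (hmax : ∀ B' : G.Subgraph, IsBlock G B' → rvd B'.coe ≤ rvd B.coe) :
    rvd G = rvd B.coe := by
  refine le_antisymm ?_ (rvd_le_of_isIndContained hB.isInduced.isIndContained)
  calc rvd G ≤ rvd (G.induce Set.univ) :=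
      rvd_le_of_isIndContained (induceUnivIso G).symm.isIndContained
    _ ≤ rvd B.coe := rvd_induce_le_of_forall G (fun A hc hn => ?_) _
  rw [induce_eq_coe_induce_top] at hc hn
  obtain ⟨B', hB', hle⟩ := exists_isBlock_le hc hn
  exact (rvd_le_of_isIndContained (hB'.induce_isIndContained hle.1)).trans (hmax B' hB')

/-- If `B` is a block of a nontrivial connected graph `G` whose `rvd` is
maximum among all blocks of `G`, then `rvd(G) = rvd(B)`. -/
theorem rvd_eq_rvd_maxBlock [Fintype V] (G : SimpleGraph V)
    (hconn : G.Connected) (hnontrivial : 1 < Fintype.card V)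
    (B : G.Subgraph) (hB : IsBlock G B)
    (hmax : ∀ B' : G.Subgraph, IsBlock G B' → rvd B'.coe ≤ rvd B.coe) :
    rvd G = rvd B.coe :=
  rvd_eq_rvd_maxBlock_general G B hB hmax
end

section
/- For every nontrivial connected graph G, rvd(G) ≤ χ_i(G), where χ_i(G) is the injective chromatic number of G; consequently rvd(G) ≤ Δ(G)(Δ(G)−1) + 1. -/
open SimpleGraph

variable {V : Type*}

/-!
Under an injective coloring every neighborhood `N(x)` is rainbow, and `N(x) - y` separates `x`
from `y` in `G - xy`, since a walk leaving `x` steps into it; so every injective coloring is a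
rainbow vertex-disconnection coloring. For the degree bound, the graph joining vertices with a
common neighbor has maximum degree at most `Δ(Δ - 1)`, so a greedy coloring of it gives an
injective coloring with `Δ(Δ - 1) + 1` colors.
-/

variable {α : Type*}

namespace SimpleGraph

theorem colorable_succ_of_forall_degree_le [Fintype V] (H : SimpleGraph V) [DecidableRel H.Adj]
    {d : ℕ} (hd : ∀ v, H.degree v ≤ d) : H.Colorable (d + 1) := by
  classical
  suffices ∀ s : Finset V, ∃ c : V → Fin (d + 1),
      ∀ u ∈ s, ∀ v ∈ s, H.Adj u v → c u ≠ c v by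
    obtain ⟨c, hc⟩ := this Finset.univ
    exact ⟨Coloring.mk c fun huv => hc _ (Finset.mem_univ _) _ (Finset.mem_univ _) huv⟩
  intro s
  induction s using Finset.induction_on with
  | empty => exact ⟨fun _ => 0, by simp⟩
  | insert a s ha ih =>
    obtain ⟨c, hc⟩ := ih
    have hused : ((H.neighborFinset a).image c).card < (Finset.univ : Finset (Fin (d + 1))).card :=
      calc ((H.neighborFinset a).image c).card ≤ H.degree a := Finset.card_image_le
        _ < d + 1 := Nat.lt_succ_of_le (hd a)
        _ = _ := by simp
    obtain ⟨k, -, hk⟩ := Finset.exists_mem_notMem_of_card_lt_card hused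
    have hk' : ∀ v, H.Adj a v → c v ≠ k := fun v hv hck =>
      hk (Finset.mem_image.mpr ⟨v, (H.mem_neighborFinset a v).mpr hv, hck⟩)
    refine ⟨Function.update c a k, ?_⟩
    intro u hu v hv huv
    have hne_of_mem {w : V} (hw : w ∈ s) : w ≠ a := fun h => ha (h ▸ hw)
    rcases Finset.mem_insert.mp hu with rfl | hus <;>
      rcases Finset.mem_insert.mp hv with rfl | hvs
    · exact absurd huv (H.loopless.irrefl _)
    · rw [Function.update_self, Function.update_of_ne (hne_of_mem hvs)]
      exact (hk' v huv).symm
    · rw [Function.update_self, Function.update_of_ne (hne_of_mem hus)]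
      exact hk' u huv.symm
    · rw [Function.update_of_ne (hne_of_mem hus), Function.update_of_ne (hne_of_mem hvs)]
      exact hc u hus v hvs huv

def commonNeighborGraph (G : SimpleGraph V) : SimpleGraph V :=
  SimpleGraph.fromRel fun u v => ∃ w, G.Adj u w ∧ G.Adj v w

theorem isInjectiveColoring_coloring_commonNeighborGraph {G : SimpleGraph V}
    (C : G.commonNeighborGraph.Coloring α) : IsInjectiveColoring G C := fun _ _ w huw hvw huv =>
  C.valid ((fromRel_adj _ _ _).mpr ⟨huv, Or.inl ⟨w, huw, hvw⟩⟩)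

theorem degree_commonNeighborGraph_le [Fintype V] (G : SimpleGraph V) [DecidableRel G.Adj]
    [DecidableRel G.commonNeighborGraph.Adj] (v : V) :
    G.commonNeighborGraph.degree v ≤ G.maxDegree * (G.maxDegree - 1) := by
  classical
  have hsub : G.commonNeighborGraph.neighborFinset v ⊆
      (G.neighborFinset v).biUnion fun w => (G.neighborFinset w).erase v := by
    intro u hu
    obtain ⟨hvu, ⟨w, hvw, huw⟩ | ⟨w, huw, hvw⟩⟩ :=
      (fromRel_adj _ _ _).mp ((G.commonNeighborGraph.mem_neighborFinset v u).mp hu) <;>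
    exact Finset.mem_biUnion.mpr ⟨w, (G.mem_neighborFinset _ _).mpr hvw,
      Finset.mem_erase.mpr ⟨hvu.symm, (G.mem_neighborFinset _ _).mpr huw.symm⟩⟩
  calc G.commonNeighborGraph.degree v
      ≤ ((G.neighborFinset v).biUnion fun w => (G.neighborFinset w).erase v).card := by
        rw [← card_neighborFinset_eq_degree]; exact Finset.card_le_card hsub
    _ ≤ ∑ w ∈ G.neighborFinset v, ((G.neighborFinset w).erase v).card := Finset.card_biUnion_le
    _ ≤ ∑ _w ∈ G.neighborFinset v, (G.maxDegree - 1) := by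
        refine Finset.sum_le_sum fun w hw => ?_
        rw [Finset.card_erase_of_mem ((G.mem_neighborFinset _ _).mpr
          ((G.mem_neighborFinset _ _).mp hw).symm), card_neighborFinset_eq_degree]
        exact Nat.sub_le_sub_right (G.degree_le_maxDegree w) 1
    _ = G.degree v * (G.maxDegree - 1) := by
        rw [Finset.sum_const, smul_eq_mul, card_neighborFinset_eq_degree]
    _ ≤ G.maxDegree * (G.maxDegree - 1) := Nat.mul_le_mul_right _ (G.degree_le_maxDegree v)

theorem exists_mem_support_neighborSet_diff (G : SimpleGraph V) {x y : V} (hxy : x ≠ y)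
    (p : (G.deleteEdges {s(x, y)}).Walk x y) : ∃ v ∈ p.support, v ∈ G.neighborSet x \ {y} := by
  cases p with
  | nil => exact absurd rfl hxy
  | cons hadj q =>
    rw [deleteEdges_adj, Set.mem_singleton_iff] at hadj
    refine ⟨_, List.mem_cons_of_mem _ q.start_mem_support, hadj.1, ?_⟩
    rintro rfl
    exact hadj.2 rfl

end SimpleGraph

theorem exists_isInjectiveColoring_fin_maxDegree [Fintype V] (G : SimpleGraph V)
    [DecidableRel G.Adj] :
    ∃ c : V → Fin (G.maxDegree * (G.maxDegree - 1) + 1), IsInjectiveColoring G c := by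
  classical
  obtain ⟨C⟩ := G.commonNeighborGraph.colorable_succ_of_forall_degree_le
    G.degree_commonNeighborGraph_le
  exact ⟨C, isInjectiveColoring_coloring_commonNeighborGraph C⟩

theorem IsInjectiveColoring.injOn_neighborSet {G : SimpleGraph V} {c : V → α}
    (hc : IsInjectiveColoring G c) (x : V) : Set.InjOn c (G.neighborSet x) :=
  fun u hu v hv => not_imp_not.mp (hc u v x hu.symm hv.symm)

theorem IsInjectiveColoring.isRVDColoring {G : SimpleGraph V} {c : V → α}
    (hc : IsInjectiveColoring G c) : IsRVDColoring G c := by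
  intro x y hxy
  have hinj := hc.injOn_neighborSet x
  refine ⟨G.neighborSet x \ {y}, fun hx => G.loopless.irrefl x hx.1, fun hy => hy.2 rfl,
    G.exists_mem_support_neighborSet_diff hxy, fun hadj => Or.inr (hinj.mono ?_),
    fun _ => hinj.mono Set.sdiff_subset⟩
  exact Set.insert_subset hadj Set.sdiff_subset

theorem rvd_le_of_isInjectiveColoring {G : SimpleGraph V} {n : ℕ} {c : V → Fin n}
    (hc : IsInjectiveColoring G c) : rvd G ≤ n :=
  Nat.sInf_le ⟨c, hc.isRVDColoring⟩

theorem rvd_le_injChromaticNumber_general [Fintype V] (G : SimpleGraph V) [DecidableRel G.Adj] :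
    rvd G ≤ injChromaticNumber G ∧
    rvd G ≤ G.maxDegree * (G.maxDegree - 1) + 1 := by
  have hbound := exists_isInjectiveColoring_fin_maxDegree G
  obtain ⟨c, hc⟩ : injChromaticNumber G ∈ {n | ∃ c : V → Fin n, IsInjectiveColoring G c} :=
    Nat.sInf_mem ⟨_, hbound⟩
  exact ⟨rvd_le_of_isInjectiveColoring hc,
    (rvd_le_of_isInjectiveColoring hc).trans (Nat.sInf_le hbound)⟩

/-- For every nontrivial connected graph `G`, `rvd(G) ≤ χᵢ(G)`, and
consequently `rvd(G) ≤ Δ(G)(Δ(G) - 1) + 1`. -/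
theorem rvd_le_injChromaticNumber [Fintype V] (G : SimpleGraph V) [DecidableRel G.Adj]
    (hconn : G.Connected) (hnontrivial : 1 < Fintype.card V) :
    rvd G ≤ injChromaticNumber G ∧
    rvd G ≤ G.maxDegree * (G.maxDegree - 1) + 1 :=
  rvd_le_injChromaticNumber_general G
end

section
/- Let G = (V, E) be a graph with no isolated vertices and at least one edge, and let k be a positive integer. Construct the split graph G̃ as follows: for each edge uv ∈ E introduce three new vertices s_{uv}, s'_{uv}, s''_{uv}, let V_s = {s_{uv}, s'_{uv}, s''_{uv} : uv ∈ E}, set V(G̃) = V ∪ V_s, and let E(G̃) consist of the edges us_{uv}, us'_{uv}, us''_{uv}, vs_{uv}, vs'_{uv}, vs''_{uv} for each uv ∈ E together with all edges between pairs of vertices of V_s (so that V_s forms a clique). Then χ(G) ≤ k if and only if rvd(G̃) ≤ k + 3|E|. -/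
open SimpleGraph

variable {V : Type*}

/-
If `χ(G) ≤ k`, colour `V` by a proper `k`-colouring and give the `3|E|` vertices of the clique
`V_s` fresh pairwise distinct colours. Then every closed neighbourhood of `G̃` is rainbow (its
part in `V` is a single vertex or the two ends of an edge), and `N(x) \ {y}` is an
`x`–`y` vertex-cut.

Conversely, every `x`–`y` vertex-cut of adjacent `x, y` contains all their common neighbours,
so any two common neighbours of an edge get distinct colours in a rainbow
vertex-disconnection colouring. In `G̃` this forces `V_s` to be rainbow, the colours on `V`
to avoid those on `V_s` (each vertex of `V` lies on an edge), and the ends of each edge of `G`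
to get distinct colours. The colouring restricted to `V` is then a proper colouring with at
most `rvd(G̃) - 3|E|` colours.
-/

section VertexCut

variable {W α : Type*} {H : SimpleGraph W}

def IsVertexCut (H : SimpleGraph W) (x y : W) (S : Set W) : Prop :=
  x ∉ S ∧ y ∉ S ∧ ∀ p : (H.deleteEdges {s(x, y)}).Walk x y, ∃ v ∈ p.support, v ∈ S

lemma isVertexCut_neighborSet_diff {x y : W} (hxy : x ≠ y) :
    IsVertexCut H x y (H.neighborSet x \ {y}) := by
  refine ⟨fun hx => H.loopless.irrefl x hx.1, fun hy => hy.2 rfl, fun p => ?_⟩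
  have hsnd := p.adj_snd (p.not_nil_of_ne hxy)
  rw [deleteEdges_adj, Set.mem_singleton_iff, Sym2.congr_right] at hsnd
  exact ⟨p.snd, p.getVert_mem_support 1, hsnd.1, hsnd.2⟩

lemma IsVertexCut.mem_of_adj_of_adj {x y w : W} {S : Set W} (hS : IsVertexCut H x y S)
    (hxw : H.Adj x w) (hwy : H.Adj w y) : w ∈ S := by
  have hxw' : (H.deleteEdges {s(x, y)}).Adj x w := by
    rw [deleteEdges_adj, Set.mem_singleton_iff, Sym2.congr_right]
    exact ⟨hxw, hwy.ne⟩
  have hwy' : (H.deleteEdges {s(x, y)}).Adj w y := by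
    rw [deleteEdges_adj, Set.mem_singleton_iff, Sym2.congr_left]
    exact ⟨hwy, hxw.ne'⟩
  obtain ⟨v, hv, hvS⟩ := hS.2.2 (.cons hxw' (.cons hwy' .nil))
  simp only [Walk.support_cons, Walk.support_nil, List.mem_cons, List.not_mem_nil,
    or_false] at hv
  rcases hv with rfl | rfl | rfl
  exacts [absurd hvS hS.1, hvS, absurd hvS hS.2.1]

lemma isRVDColoring_of_injOn_insert_neighborSet {c : W → α}
    (hc : ∀ x, Set.InjOn c (insert x (H.neighborSet x))) : IsRVDColoring H c := by
  intro x y hxy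
  obtain ⟨hx, hy, hcut⟩ := isVertexCut_neighborSet_diff (H := H) hxy
  have hinj : Set.InjOn c (insert x (H.neighborSet x \ {y})) :=
    (hc x).mono (Set.insert_subset_insert Set.sdiff_subset)
  exact ⟨_, hx, hy, hcut, fun _ => .inl hinj, fun _ => hinj.mono (Set.subset_insert _ _)⟩

lemma exists_isRVDColoring_fin_rvd [Finite W] (H : SimpleGraph W) :
    ∃ c : W → Fin (rvd H), IsRVDColoring H c :=
  Nat.sInf_mem (s := {n | ∃ c : W → Fin n, IsRVDColoring H c}) ⟨Nat.card W, Finite.equivFin W,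
    isRVDColoring_of_injOn_insert_neighborSet fun _ => (Finite.equivFin W).injective.injOn⟩

lemma IsRVDColoring.apply_ne_of_adj_of_adj {c : W → α} (hc : IsRVDColoring H c)
    {x y a b : W} (hxy : H.Adj x y) (hxa : H.Adj x a) (hay : H.Adj a y) (hxb : H.Adj x b)
    (hby : H.Adj b y) (hab : a ≠ b) : c a ≠ c b := by
  obtain ⟨S, hx, hy, hcut, hrainbow, -⟩ := hc x y hxy.ne
  have hS : IsVertexCut H x y S := ⟨hx, hy, hcut⟩
  have ha := hS.mem_of_adj_of_adj hxa hay
  have hb := hS.mem_of_adj_of_adj hxb hby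
  rcases hrainbow hxy with h | h <;>
    exact fun hcab => hab (h (Set.mem_insert_of_mem _ ha) (Set.mem_insert_of_mem _ hb) hcab)

end VertexCut

section Coloring

variable {G : SimpleGraph V}

lemma SimpleGraph.Coloring.injOn_sumMap_of_isClique {β γ δ : Type*} (C : G.Coloring γ)
    {g : β → δ} (hg : Function.Injective g) {T : Set (V ⊕ β)}
    (hT : G.IsClique (Sum.inl ⁻¹' T)) : Set.InjOn (Sum.map C g) T := by
  rintro (a | p) ha (b | q) hb h <;> simp only [Sum.map_inl, Sum.map_inr, Sum.inl.injEq,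
    Sum.inr.injEq, reduceCtorEq] at h ⊢
  · by_contra hab
    exact C.valid (hT ha hb hab) h
  · exact hg h

lemma SimpleGraph.colorable_sub_card_of_injective {β : Type*} [Fintype β] {n : ℕ}
    (f : V → Fin n) (g : β → Fin n) (hg : Function.Injective g) (hfg : ∀ a b, f a ≠ g b)
    (hf : ∀ u v, G.Adj u v → f u ≠ f v) : G.Colorable (n - Fintype.card β) := by
  classical
  let C : G.Coloring ↥(Set.range g)ᶜ :=
    Coloring.mk (fun v => ⟨f v, fun ⟨b, hb⟩ => hfg v b hb.symm⟩)
      fun huv hfuv => hf _ _ huv (congrArg Subtype.val hfuv)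
  simpa only [Fintype.card_compl_set, Set.card_range_of_injective hg, Fintype.card_fin] using
    C.colorable

lemma exists_ne_and_ne_fin_three (i j : Fin 3) : ∃ m, m ≠ i ∧ m ≠ j := by
  revert i j
  decide

end Coloring

section TildeSplit

variable {G : SimpleGraph V}

@[simp]
lemma tildeSplit_adj_inl_inl (a b : V) : ¬(tildeSplit G).Adj (.inl a) (.inl b) := by
  simp [tildeSplit]

@[simp]
lemma tildeSplit_adj_inl_inr (a : V) (p : G.edgeSet × Fin 3) :
    (tildeSplit G).Adj (.inl a) (.inr p) ↔ a ∈ (p.1 : Sym2 V) := by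
  simp only [tildeSplit, fromRel_adj, ne_eq, reduceCtorEq, not_false_eq_true, Sum.inl.injEq,
    Sum.inr.injEq, false_and, and_false, exists_false, or_false, true_and]
  constructor
  · rintro ⟨_, _, _, rfl, rfl, h⟩
    exact h
  · exact fun h => ⟨_, _, _, rfl, rfl, h⟩

@[simp]
lemma tildeSplit_adj_inr_inl (a : V) (p : G.edgeSet × Fin 3) :
    (tildeSplit G).Adj (.inr p) (.inl a) ↔ a ∈ (p.1 : Sym2 V) := by
  rw [adj_comm, tildeSplit_adj_inl_inr]

@[simp]
lemma tildeSplit_adj_inr_inr (p q : G.edgeSet × Fin 3) :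
    (tildeSplit G).Adj (.inr p) (.inr q) ↔ p ≠ q := by
  simp only [tildeSplit, fromRel_adj, ne_eq, Sum.inr.injEq]
  exact ⟨And.left, fun h => ⟨h, .inl (.inr ⟨p, q, rfl, rfl⟩)⟩⟩

lemma isClique_preimage_inl_insert_neighborSet_tildeSplit (z : V ⊕ (G.edgeSet × Fin 3)) :
    G.IsClique (Sum.inl ⁻¹' insert z ((tildeSplit G).neighborSet z)) := by
  rcases z with a | ⟨e, _⟩
  · refine (isClique_singleton a).subset fun b hb => ?_
    simpa using hb
  · refine fun a ha b hb hab => G.adj_iff_exists_edge.mpr ⟨hab, e, e.2, ?_, ?_⟩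
    · simpa using ha
    · simpa using hb

theorem rvd_tildeSplit_le_of_colorable [Fintype V] [DecidableEq V] [DecidableRel G.Adj] {k : ℕ}
    (h : G.Colorable k) : rvd (tildeSplit G) ≤ k + 3 * G.edgeFinset.card := by
  obtain ⟨C⟩ := h
  let g : G.edgeSet × Fin 3 ≃ Fin (3 * G.edgeFinset.card) :=
    Fintype.equivFinOfCardEq <| by
      rw [Fintype.card_prod, Fintype.card_fin, ← edgeFinset_card, mul_comm]
  refine Nat.sInf_le ⟨finSumFinEquiv ∘ Sum.map C g,
    isRVDColoring_of_injOn_insert_neighborSet fun z => ?_⟩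
  exact finSumFinEquiv.injective.comp_injOn <|
    C.injOn_sumMap_of_isClique g.injective (isClique_preimage_inl_insert_neighborSet_tildeSplit z)

variable {α : Type*} {c : V ⊕ (G.edgeSet × Fin 3) → α}

lemma IsRVDColoring.injective_comp_inr_tildeSplit (hc : IsRVDColoring (tildeSplit G) c) :
    Function.Injective (c ∘ Sum.inr) := by
  rintro ⟨e, i⟩ ⟨f, j⟩ h
  by_contra hne
  by_cases hef : e = f
  · subst hef
    have hij : i ≠ j := fun hij => hne (hij ▸ rfl)
    obtain ⟨m, hmi, hmj⟩ := exists_ne_and_ne_fin_three i j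
    have hu := Sym2.out_fst_mem (e : Sym2 V)
    refine hc.apply_ne_of_adj_of_adj (x := .inr (e, m)) (y := .inl (e : Sym2 V).out.1)
      ?_ ?_ ?_ ?_ ?_ (by simpa using hij) h <;> simp [hu, hmi, hmj]
  · obtain ⟨i₁, hi₁, -⟩ := exists_ne_and_ne_fin_three i i
    obtain ⟨i₂, hi₂, hi₂₁⟩ := exists_ne_and_ne_fin_three i i₁
    refine hc.apply_ne_of_adj_of_adj (x := .inr (e, i₁)) (y := .inr (e, i₂))
      ?_ ?_ ?_ ?_ ?_ (by simp [hef]) h <;> simp [hef, Ne.symm hef, hi₁, hi₂.symm, hi₂₁.symm]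

lemma IsRVDColoring.apply_inl_ne_apply_inr_tildeSplit (hc : IsRVDColoring (tildeSplit G) c)
    {a : V} (ha : ∃ b, G.Adj a b) (p : G.edgeSet × Fin 3) : c (.inl a) ≠ c (.inr p) := by
  obtain ⟨b, hab⟩ := ha
  obtain ⟨i₁, hi₁, -⟩ := exists_ne_and_ne_fin_three p.2 p.2
  obtain ⟨i₂, hi₂, hi₂₁⟩ := exists_ne_and_ne_fin_three p.2 i₁
  let e : G.edgeSet := ⟨s(a, b), hab⟩
  refine hc.apply_ne_of_adj_of_adj (x := .inr (e, i₁)) (y := .inr (e, i₂))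
    ?_ ?_ ?_ ?_ ?_ (by simp) <;> simp [e, Prod.ext_iff, hi₁, hi₂.symm, hi₂₁.symm]

lemma IsRVDColoring.apply_inl_ne_apply_inl_tildeSplit (hc : IsRVDColoring (tildeSplit G) c)
    {a b : V} (hab : G.Adj a b) : c (.inl a) ≠ c (.inl b) := by
  let e : G.edgeSet := ⟨s(a, b), hab⟩
  refine hc.apply_ne_of_adj_of_adj (x := .inr (e, 0)) (y := .inr (e, 1))
    ?_ ?_ ?_ ?_ ?_ (by simpa using hab.ne) <;> simp [e]

theorem colorable_of_rvd_tildeSplit_le [Fintype V] [DecidableEq V] [DecidableRel G.Adj]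
    (hiso : ∀ v : V, ∃ u : V, G.Adj v u) {k : ℕ}
    (h : rvd (tildeSplit G) ≤ k + 3 * G.edgeFinset.card) : G.Colorable k := by
  obtain ⟨c, hc⟩ := exists_isRVDColoring_fin_rvd (tildeSplit G)
  refine (G.colorable_sub_card_of_injective (c ∘ .inl) (c ∘ .inr)
    hc.injective_comp_inr_tildeSplit (fun a => hc.apply_inl_ne_apply_inr_tildeSplit (hiso a))
    fun _ _ => hc.apply_inl_ne_apply_inl_tildeSplit).mono ?_
  simp only [Fintype.card_prod, Fintype.card_fin, ← edgeFinset_card]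
  omega

end TildeSplit

theorem colorable_iff_rvd_tildeSplit_le_general [Fintype V] [DecidableEq V] (G : SimpleGraph V)
    [DecidableRel G.Adj]
    (hiso : ∀ v : V, ∃ u : V, G.Adj v u)
    (k : ℕ) :
    G.Colorable k ↔ rvd (tildeSplit G) ≤ k + 3 * G.edgeFinset.card :=
  ⟨rvd_tildeSplit_le_of_colorable, colorable_of_rvd_tildeSplit_le hiso⟩

/-- For `G` with no isolated vertices and at least one edge,
`χ(G) ≤ k` iff `rvd(G̃) ≤ k + 3|E|`, where `G̃` is the split reduction graph. -/
theorem colorable_iff_rvd_tildeSplit_le [Fintype V] [DecidableEq V] (G : SimpleGraph V)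
    [DecidableRel G.Adj]
    (hiso : ∀ v : V, ∃ u : V, G.Adj v u) (hE : G.edgeSet.Nonempty)
    (k : ℕ) (hk : 0 < k) :
    G.Colorable k ↔ rvd (tildeSplit G) ≤ k + 3 * G.edgeFinset.card :=
  colorable_iff_rvd_tildeSplit_le_general G hiso k
end
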